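/- arXiv:1809.07733 — 6 statements merged into one kernel-verified Lean document; each statement's English description precedes it below -/
import Mathlib

section
/- For all integers n ≥ 1 and k ≥ 1 and every polynomial P ∈ P_{n,k} (i.e., P(x) = x^{n+1}R(x) with R a real polynomial of degree at most k−1), one has (1/12)·(n/k)·V_0^1(P) ≤ ‖P′‖_{[0,1]}, where V_0^1(P) = ∫_0^1 |P′(x)| dx and ‖f‖_{[0,1]} = sup_{x∈[0,1]} |f(x)|. -/
open Polynomial

open Polynomial Real

namespace ChebAux

/-- natDegree of Chebyshev T is at most m (for natural index). -/
lemma natDegree_T_le : ∀ m : ℕ, (Chebyshev.T ℝ (m:ℤ)).natDegree ≤ m ∧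
    (Chebyshev.T ℝ ((m:ℤ)+1)).natDegree ≤ m + 1 := by
  intro m
  induction m with
  | zero => constructor <;> simp [Polynomial.Chebyshev.T_zero, Polynomial.Chebyshev.T_one]
  | succ m ih =>
    obtain ⟨h1, h2⟩ := ih
    refine ⟨by exact_mod_cast h2, ?_⟩
    have : ((m:ℤ)+1) + 1 = (m:ℤ) + 2 := by ring
    rw [show (((m+1:ℕ)):ℤ) + 1 = (m:ℤ) + 2 by push_cast; ring, Polynomial.Chebyshev.T_add_two]
    refine le_trans (Polynomial.natDegree_sub_le _ _) ?_
    refine max_le ?_ (le_trans h1 (by omega))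
    refine le_trans (Polynomial.natDegree_mul_le) ?_
    have hX : (2 * X : ℝ[X]).natDegree ≤ 1 := by
      refine le_trans (Polynomial.natDegree_mul_le) ?_
      simp
    have : ((m:ℤ) + 1 + 1) = ((m:ℤ)+1) + 1 := by ring
    calc (2 * X : ℝ[X]).natDegree + (Chebyshev.T ℝ ((m:ℤ)+1)).natDegree
        ≤ 1 + (m+1) := add_le_add hX h2
      _ ≤ m + 1 + 1 := by omega

lemma T_real_cosh (θ : ℝ) (m : ℤ) :
    (Chebyshev.T ℝ m).eval (Real.cosh θ) = Real.cosh (m * θ) := by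
  have h := Polynomial.Chebyshev.T_complex_cos ((θ:ℂ) * Complex.I) m
  rw [Complex.cos_mul_I] at h
  have h2 : ((m:ℂ)) * ((θ:ℂ) * Complex.I) = ((m * θ : ℝ) : ℂ) * Complex.I := by
    push_cast; ring
  rw [h2, Complex.cos_mul_I] at h
  have := Polynomial.Chebyshev.complex_ofReal_eval_T (Real.cosh θ) m
  rw [Complex.ofReal_cosh] at this
  rw [← this] at h
  rw [← Complex.ofReal_cosh] at h
  exact_mod_cast h

end ChebAux

namespace ChebAux

lemma cosh_ge_quad {t : ℝ} (ht : 0 ≤ t) : 1 + t^2/2 ≤ Real.cosh t := by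
  have h2 : Real.cosh t = Real.cosh (2 * (t/2)) := by ring_nf
  rw [h2, Real.cosh_two_mul, Real.cosh_sq]
  have : t/2 ≤ Real.sinh (t/2) := Real.self_le_sinh_iff.2 (by linarith)
  nlinarith [Real.sinh_nonneg_iff.2 (show (0:ℝ) ≤ t/2 by linarith)]

lemma exists_cosh_eq {y θ0 : ℝ} (hy : 1 ≤ y) (h0 : 0 ≤ θ0) (hc : y ≤ Real.cosh θ0) :
    ∃ θ ∈ Set.Icc 0 θ0, Real.cosh θ = y := by
  have := intermediate_value_Icc h0 (Real.continuous_cosh.continuousOn (s := Set.Icc 0 θ0))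
  exact this ⟨by simpa using hy, hc⟩

lemma cosh_le_exp {z : ℝ} (hz : 0 ≤ z) : Real.cosh z ≤ Real.exp z := by
  rw [Real.cosh_eq]
  have : Real.exp (-z) ≤ Real.exp z := Real.exp_le_exp.2 (by linarith)
  linarith

lemma one_le_T_eval (m : ℕ) {y : ℝ} (hy : 1 ≤ y) : 1 ≤ (Chebyshev.T ℝ (m:ℤ)).eval y := by
  obtain ⟨θ, hθmem, hθ⟩ := exists_cosh_eq hy (le_trans zero_le_one hy)
    (by nlinarith [cosh_ge_quad (le_trans zero_le_one hy)])
  rw [← hθ, T_real_cosh]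
  exact Real.one_le_cosh _

lemma T_eval_le_exp (m : ℕ) {u : ℝ} (hu : 0 ≤ u) :
    (Chebyshev.T ℝ (m:ℤ)).eval (1+u) ≤ Real.exp (m * Real.sqrt (2*u)) := by
  set θ0 := Real.sqrt (2*u) with hθ0
  have h0 : 0 ≤ θ0 := Real.sqrt_nonneg _
  have hsq : θ0^2 = 2*u := Real.sq_sqrt (by linarith)
  have hc : 1 + u ≤ Real.cosh θ0 := by
    have := cosh_ge_quad h0
    rw [hsq] at this; linarith
  obtain ⟨θ, hθmem, hθ⟩ := exists_cosh_eq (by linarith : (1:ℝ) ≤ 1+u) h0 hc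
  rw [← hθ, T_real_cosh]
  calc Real.cosh ((m:ℤ) * θ) ≤ Real.exp ((m:ℤ) * θ) :=
        cosh_le_exp (mul_nonneg (by positivity) hθmem.1)
    _ ≤ Real.exp (m * θ0) := by
        apply Real.exp_le_exp.2
        push_cast
        exact mul_le_mul_of_nonneg_left hθmem.2 (by positivity)


end ChebAux

namespace ChebAux

lemma eta_eval (m : ℕ) (hm : 0 < m) (j : ℕ) :
    (Chebyshev.T ℝ (m:ℤ)).eval (Real.cos (j * π / m)) = (-1)^j := by
  rw [Polynomial.Chebyshev.T_real_cos]
  have hm' : (m:ℝ) ≠ 0 := Nat.cast_ne_zero.2 hm.ne'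
  have : ((m:ℤ):ℝ) * (j * π / m) = (j:ℤ) * π - 0 := by
    push_cast; field_simp; ring
  rw [this, Real.cos_int_mul_pi_sub]
  simp

lemma eta_anti (m : ℕ) (hm : 0 < m) {i j : ℕ} (hij : i ≤ j) (hj : j ≤ m) :
    Real.cos (j * π / m) ≤ Real.cos (i * π / m) := by
  have hm' : (0:ℝ) < m := Nat.cast_pos.2 hm
  apply Real.cos_le_cos_of_nonneg_of_le_pi
  · positivity
  · rw [div_le_iff₀ hm']
    have : (j:ℝ) ≤ m := Nat.cast_le.2 hj
    nlinarith [Real.pi_pos]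
  · have : (i:ℝ) ≤ j := Nat.cast_le.2 hij
    have hπ := Real.pi_pos
    gcongr

end ChebAux

namespace ChebAux

lemma cheb_bound_aux (m : ℕ) (hm : 0 < m) (q : ℝ[X]) (hq : q.natDegree ≤ m) (B : ℝ)
    (hB : ∀ x ∈ Set.Icc (-1:ℝ) 1, |q.eval x| ≤ B) {y : ℝ} (hy : 1 ≤ y)
    (hpos : 0 < q.eval y) : q.eval y ≤ B * (Chebyshev.T ℝ (m:ℤ)).eval y := by
  by_contra hcon
  push_neg at hcon
  set Tval := (Chebyshev.T ℝ (m:ℤ)).eval y with hTval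
  set A := q.eval y with hA
  have hT1 : 1 ≤ Tval := one_le_T_eval m hy
  have hB0 : 0 ≤ B := le_trans (abs_nonneg _) (hB 0 ⟨by norm_num, by norm_num⟩)
  have hBTA : B * Tval < A := hcon
  set η : ℕ → ℝ := fun j => Real.cos (j * π / m) with hη
  have hηmem : ∀ j, η j ∈ Set.Icc (-1:ℝ) 1 :=
    fun j => ⟨Real.neg_one_le_cos _, Real.cos_le_one _⟩
  set p : ℝ[X] := Polynomial.C A * Chebyshev.T ℝ (m:ℤ) - Polynomial.C Tval * q with hp
  have hpdeg : p.natDegree ≤ m := by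
    refine le_trans (Polynomial.natDegree_sub_le _ _) (max_le ?_ ?_)
    · exact le_trans (Polynomial.natDegree_C_mul_le _ _) (natDegree_T_le m).1
    · exact le_trans (Polynomial.natDegree_C_mul_le _ _) hq
  have hpeval : ∀ j, p.eval (η j) = A * (-1)^j - Tval * q.eval (η j) := by
    intro j
    simp [hp, hη, eta_eval m hm j]
  have habs : ∀ j, |Tval * q.eval (η j)| < A := by
    intro j
    rw [abs_mul, abs_of_nonneg (by linarith : (0:ℝ) ≤ Tval)]
    calc Tval * |q.eval (η j)| ≤ Tval * B :=
          mul_le_mul_of_nonneg_left (hB _ (hηmem j)) (by linarith)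
      _ = B * Tval := mul_comm _ _
      _ < A := hBTA
  have hsignE : ∀ j, Even j → 0 < p.eval (η j) := by
    intro j hj
    rw [hpeval, hj.neg_one_pow]
    have := (abs_lt.1 (habs j)).2
    linarith
  have hsignO : ∀ j, Odd j → p.eval (η j) < 0 := by
    intro j hj
    rw [hpeval, hj.neg_one_pow]
    have := (abs_lt.1 (habs j)).1
    linarith
  have hcont : ContinuousOn (fun z => p.eval z) (Set.univ : Set ℝ) :=
    (Polynomial.continuous p).continuousOn
  have hroots : ∀ j : Fin m, ∃ z, z ∈ Set.Ioo (η ((j:ℕ)+1)) (η (j:ℕ)) ∧ p.eval z = 0 := by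
    intro j
    have hlt : η ((j:ℕ)+1) < η (j:ℕ) := by
      have h1 : η ((j:ℕ)+1) ≤ η (j:ℕ) := eta_anti m hm (Nat.le_succ _) (by omega)
      rcases lt_or_eq_of_le h1 with h | h
      · exact h
      · exfalso
        rcases Nat.even_or_odd (j:ℕ) with he | ho
        · have := hsignE _ he
          have := hsignO ((j:ℕ)+1) (he.add_one)
          rw [h] at this; linarith
        · have := hsignO _ ho
          have := hsignE ((j:ℕ)+1) (ho.add_one)
          rw [h] at this; linarith
    rcases Nat.even_or_odd (j:ℕ) with he | ho
    · -- p(η (j+1)) < 0 < p(η j) : increasing direction left to right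
      have h1 : p.eval (η ((j:ℕ)+1)) < 0 := hsignO _ he.add_one
      have h2 : 0 < p.eval (η (j:ℕ)) := hsignE _ he
      have := intermediate_value_Ioo (le_of_lt hlt)
        ((Polynomial.continuous p).continuousOn : ContinuousOn (fun z => p.eval z) _)
      obtain ⟨z, hz, hz0⟩ := this ⟨h1, h2⟩
      exact ⟨z, hz, hz0⟩
    · have h1 : 0 < p.eval (η ((j:ℕ)+1)) := hsignE _ ho.add_one
      have h2 : p.eval (η (j:ℕ)) < 0 := hsignO _ ho
      have := intermediate_value_Ioo' (le_of_lt hlt)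
        ((Polynomial.continuous p).continuousOn : ContinuousOn (fun z => p.eval z) _)
      obtain ⟨z, hz, hz0⟩ := this ⟨h2, h1⟩
      exact ⟨z, hz, hz0⟩
  choose ξ hξmem hξroot using hroots
  have hξlt1 : ∀ j : Fin m, ξ j < 1 := by
    intro j
    have h1 : η (j:ℕ) ≤ η 0 := eta_anti m hm (Nat.zero_le _) (by omega)
    have h0 : η 0 = 1 := by simp [hη]
    have := (hξmem j).2
    linarith [h0 ▸ h1]
  have hξanti : ∀ i j : Fin m, i < j → ξ j < ξ i := by
    intro i j hij
    have h1 : ξ j < η (j:ℕ) := (hξmem j).2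
    have h2 : η (j:ℕ) ≤ η ((i:ℕ)+1) := eta_anti m hm (by omega) (by omega)
    have h3 : η ((i:ℕ)+1) < ξ i := (hξmem i).1
    linarith
  set f : Fin m ⊕ Unit → ℝ := Sum.elim ξ (fun _ => y) with hf
  have hinj : Function.Injective f := by
    rintro (i | i) (j | j) hij
    · simp only [hf, Sum.elim_inl] at hij
      rcases lt_trichotomy i j with h | h | h
      · exact absurd hij (ne_of_gt (hξanti i j h))
      · exact congrArg Sum.inl h
      · exact absurd hij.symm (ne_of_gt (hξanti j i h))
    · exfalso
      simp only [hf, Sum.elim_inl, Sum.elim_inr] at hij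
      linarith [hξlt1 i]
    · exfalso
      simp only [hf, Sum.elim_inl, Sum.elim_inr] at hij
      linarith [hξlt1 j]
    · simp
  have heval : ∀ i, p.eval (f i) = 0 := by
    rintro (i | i)
    · exact hξroot i
    · simp only [hf, Sum.elim_inr]
      simp [hp, ← hTval, ← hA]
      ring
  have hcard : p.natDegree < Fintype.card (Fin m ⊕ Unit) := by
    simp only [Fintype.card_sum, Fintype.card_fin, Fintype.card_unit]
    omega
  have hp0 : p = 0 := p.eq_zero_of_natDegree_lt_card_of_eval_eq_zero hinj heval hcard
  have := hsignE 0 (Even.zero)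
  rw [hp0] at this
  simp at this

end ChebAux

namespace ChebAux

lemma cheb_bound (m : ℕ) (q : ℝ[X]) (hq : q.natDegree ≤ m) (B : ℝ)
    (hB : ∀ x ∈ Set.Icc (-1:ℝ) 1, |q.eval x| ≤ B) {y : ℝ} (hy : 1 ≤ y) :
    |q.eval y| ≤ B * (Chebyshev.T ℝ (m:ℤ)).eval y := by
  have hB0 : 0 ≤ B := le_trans (abs_nonneg _) (hB 0 ⟨by norm_num, by norm_num⟩)
  have hT1 : 1 ≤ (Chebyshev.T ℝ (m:ℤ)).eval y := one_le_T_eval m hy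
  rcases Nat.eq_zero_or_pos m with hm | hm
  · subst hm
    obtain ⟨c, hc⟩ := Polynomial.natDegree_eq_zero.1 (Nat.le_zero.1 hq)
    rw [← hc]
    simp only [Polynomial.eval_C]
    have : |c| ≤ B := by
      have := hB 0 ⟨by norm_num, by norm_num⟩
      rwa [← hc, Polynomial.eval_C] at this
    calc |c| ≤ B := this
      _ = B * 1 := (mul_one B).symm
      _ ≤ B * (Chebyshev.T ℝ ((0:ℕ):ℤ)).eval y := by
          exact mul_le_mul_of_nonneg_left hT1 hB0
  · have h1 : q.eval y ≤ B * (Chebyshev.T ℝ (m:ℤ)).eval y := by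
      by_cases hpos : 0 < q.eval y
      · exact cheb_bound_aux m hm q hq B hB hy hpos
      · push_neg at hpos
        calc q.eval y ≤ 0 := hpos
          _ ≤ B * _ := mul_nonneg hB0 (by linarith)
    have h2 : -q.eval y ≤ B * (Chebyshev.T ℝ (m:ℤ)).eval y := by
      have hq' : (-q).natDegree ≤ m := by rwa [Polynomial.natDegree_neg]
      have hB' : ∀ x ∈ Set.Icc (-1:ℝ) 1, |(-q).eval x| ≤ B := by
        intro x hx
        rw [Polynomial.eval_neg, abs_neg]
        exact hB x hx
      by_cases hpos : 0 < (-q).eval y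
      · have := cheb_bound_aux m hm (-q) hq' B hB' hy hpos
        rwa [Polynomial.eval_neg] at this
      · push_neg at hpos
        rw [Polynomial.eval_neg] at hpos
        calc -q.eval y ≤ 0 := hpos
          _ ≤ B * _ := mul_nonneg hB0 (by linarith)
    exact abs_le.2 ⟨by linarith, h1⟩

lemma cheb_bound_left (m : ℕ) (q : ℝ[X]) (hq : q.natDegree ≤ m) {α β B x : ℝ}
    (hαβ : α < β) (hB : ∀ z ∈ Set.Icc α β, |q.eval z| ≤ B) (hx : x ≤ α) :
    |q.eval x| ≤ B * (Chebyshev.T ℝ (m:ℤ)).eval ((α + β - 2*x)/(β - α)) := by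
  set c : ℝ := (β - α)/2 with hc
  have hc0 : 0 < c := by simp [hc]; linarith
  set d : ℝ := (α + β)/2 with hd
  set ℓ : ℝ[X] := Polynomial.C (-c) * Polynomial.X + Polynomial.C d with hℓ
  set qq : ℝ[X] := q.comp ℓ with hqq
  have hqqdeg : qq.natDegree ≤ m := by
    refine le_trans (Polynomial.natDegree_comp_le) ?_
    have : ℓ.natDegree ≤ 1 := Polynomial.natDegree_linear_le
    calc q.natDegree * ℓ.natDegree ≤ m * 1 := Nat.mul_le_mul hq this
      _ = m := mul_one m
  have hqqeval : ∀ s : ℝ, qq.eval s = q.eval (d - c*s) := by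
    intro s
    rw [hqq, Polynomial.eval_comp]
    congr 1
    simp [hℓ]; ring
  have hqqB : ∀ s ∈ Set.Icc (-1:ℝ) 1, |qq.eval s| ≤ B := by
    intro s hs
    rw [hqqeval]
    apply hB
    constructor
    · have : c * s ≤ c * 1 := mul_le_mul_of_nonneg_left hs.2 hc0.le
      simp [hd, hc] at this ⊢; nlinarith [hs.2]
    · have : c * (-1) ≤ c * s := mul_le_mul_of_nonneg_left hs.1 hc0.le
      simp [hd, hc] at this ⊢; nlinarith [hs.1]
  set y : ℝ := (d - x)/c with hy'
  have hy1 : 1 ≤ y := by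
    rw [hy', le_div_iff₀ hc0]
    simp [hd, hc]; linarith
  have hxy : d - c*y = x := by
    rw [hy', mul_div_assoc', mul_div_cancel_left₀ _ hc0.ne']; ring
  have := cheb_bound m qq hqqdeg B hqqB hy1
  rw [hqqeval, hxy] at this
  convert this using 3
  rw [hy', hd, hc]
  have hne : β - α ≠ 0 := by linarith
  field_simp

end ChebAux

namespace ChebAux

set_option maxHeartbeats 1000000 in
lemma key_decay (n k : ℕ) (hk : 1 ≤ k) (hnk : 12*k < n) (Q : ℝ[X]) (hQ : Q.natDegree ≤ k - 1)
    (M : ℝ) (hM : ∀ z ∈ Set.Icc (0:ℝ) 1, z^n * |Q.eval z| ≤ M)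
    {x : ℝ} (hx0 : 0 ≤ x) (hx1 : x ≤ 1 - 4*(k:ℝ)/n) :
    x^n * |Q.eval x| ≤ M * Real.exp (-((n:ℝ)/2) * ((1 - 4*(k:ℝ)/n) - x)) := by
  have hK1 : (1:ℝ) ≤ k := by exact_mod_cast hk
  have hN : (12:ℝ)*k < n := by exact_mod_cast hnk
  have hN0 : (0:ℝ) < n := by linarith
  set δ : ℝ := 2*k/n with hδ
  have hδ0 : 0 < δ := by positivity
  have hδ6 : δ < 1/6 := by
    rw [hδ, div_lt_iff₀ hN0]; linarith
  set a : ℝ := 1 - δ with ha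
  have ha0 : 0 < a := by rw [ha]; linarith
  have ha1 : a < 1 := by rw [ha]; linarith
  have hb : 1 - 4*(k:ℝ)/n = a - δ := by rw [ha, hδ]; ring
  rw [hb] at hx1 ⊢
  set t : ℝ := a - x with ht
  have ht0 : 0 < t := by rw [ht]; linarith
  have hM0 : 0 ≤ M := le_trans (by positivity) (hM 1 ⟨zero_le_one, le_refl 1⟩)
  have han : (0:ℝ) < a^n := pow_pos ha0 n
  set B : ℝ := M / a^n with hB'
  have hB : ∀ z ∈ Set.Icc a 1, |Q.eval z| ≤ B := by
    intro z hz
    have hz0 : 0 ≤ z := le_trans ha0.le hz.1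
    have hzn : a^n ≤ z^n := pow_le_pow_left₀ ha0.le hz.1 n
    have h1 : a^n * |Q.eval z| ≤ z^n * |Q.eval z| :=
      mul_le_mul_of_nonneg_right hzn (abs_nonneg _)
    have h2 := hM z ⟨hz0, hz.2⟩
    rw [hB', le_div_iff₀ han]
    calc |Q.eval z| * a^n = a^n * |Q.eval z| := mul_comm _ _
      _ ≤ z^n * |Q.eval z| := h1
      _ ≤ M := h2
  have hcomp := cheb_bound_left (k-1) Q hQ ha1 hB (le_of_lt (by linarith : x < a))
  -- rewrite argument of T as 1 + u
  set u : ℝ := 2*t/δ with hu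
  have hu0 : 0 ≤ u := by positivity
  have harg : (a + 1 - 2*x)/(1 - a) = 1 + u := by
    have hδne : δ ≠ 0 := hδ0.ne'
    rw [hu, ht, ha]
    field_simp
    have e1 : δ * δ⁻¹ = 1 := mul_inv_cancel₀ hδne
    have e2 : δ * x * δ⁻¹ = x := by rw [mul_comm δ x, mul_assoc, e1, mul_one]
    have e3 : δ ^ 2 * δ⁻¹ = δ := by rw [sq, mul_assoc, e1, mul_one]
    linear_combination (-2) * e2 + 2 * e1 - e3
  rw [harg] at hcomp
  have hT := T_eval_le_exp (k-1) hu0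
  have hTpos : (0:ℝ) ≤ (Chebyshev.T ℝ ((k-1:ℕ):ℤ)).eval (1+u) :=
    le_trans zero_le_one (one_le_T_eval _ (by linarith))
  have hQx : |Q.eval x| ≤ B * Real.exp (((k:ℝ)-1) * Real.sqrt (2*u)) := by
    have hBnn : 0 ≤ B := by positivity
    have hcast : ((k-1:ℕ):ℝ) = (k:ℝ) - 1 := by
      have : 1 ≤ k := hk
      push_cast [Nat.cast_sub this]
      ring
    calc |Q.eval x| ≤ B * (Chebyshev.T ℝ ((k-1:ℕ):ℤ)).eval (1+u) := hcomp
      _ ≤ B * Real.exp (((k-1:ℕ):ℝ) * Real.sqrt (2*u)) :=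
          mul_le_mul_of_nonneg_left hT hBnn
      _ = B * Real.exp (((k:ℝ)-1) * Real.sqrt (2*u)) := by rw [hcast]
  -- exponent bound : (k-1)√(2u) ≤ n√(δt)
  have hsqrt : ((k:ℝ)-1) * Real.sqrt (2*u) ≤ (n:ℝ) * Real.sqrt (δ*t) := by
    have h2u : 2*u = (4/δ^2) * (δ*t) := by
      rw [hu]; field_simp; ring
    have : Real.sqrt (2*u) = (2/δ) * Real.sqrt (δ*t) := by
      rw [h2u, Real.sqrt_mul (by positivity)]
      congr 1
      rw [show (4:ℝ)/δ^2 = (2/δ)^2 by ring]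
      exact Real.sqrt_sq (by positivity)
    rw [this]
    have hδt : 0 ≤ Real.sqrt (δ*t) := Real.sqrt_nonneg _
    have hkn : ((k:ℝ)-1) * (2/δ) ≤ n := by
      have h2δ : 2/δ = (n:ℝ)/(k:ℝ) := by
        rw [hδ]; field_simp
      rw [h2δ, ← mul_div_assoc, div_le_iff₀ (by positivity : (0:ℝ) < (k:ℝ))]
      nlinarith
    calc ((k:ℝ)-1) * ((2/δ) * Real.sqrt (δ*t)) = (((k:ℝ)-1) * (2/δ)) * Real.sqrt (δ*t) := by ring
      _ ≤ (n:ℝ) * Real.sqrt (δ*t) := mul_le_mul_of_nonneg_right hkn hδt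
  -- AM-GM
  have hamgm : Real.sqrt (δ*t) ≤ (δ + t)/2 := by
    rw [Real.sqrt_mul hδ0.le]
    nlinarith [Real.sq_sqrt hδ0.le, Real.sq_sqrt ht0.le, Real.sqrt_nonneg δ, Real.sqrt_nonneg t,
      sq_nonneg (Real.sqrt δ - Real.sqrt t)]
  -- (x/a)^n ≤ exp(-n t)
  have hxa : (x/a)^n ≤ Real.exp (-(n:ℝ)*t) := by
    have h1 : x/a ≤ Real.exp (-t) := by
      have h2 : 1 - t/a ≤ Real.exp (-(t/a)) := by
        have := Real.add_one_le_exp (-(t/a))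
        linarith
      have h3 : Real.exp (-(t/a)) ≤ Real.exp (-t) := by
        apply Real.exp_le_exp.2
        have : t ≤ t/a := by
          rw [le_div_iff₀ ha0]
          calc t*a ≤ t*1 := mul_le_mul_of_nonneg_left ha1.le ht0.le
            _ = t := mul_one t
        linarith
      have h4 : x/a = 1 - t/a := by
        rw [ht]; field_simp; ring
      linarith [h4 ▸ (h2.trans h3)]
    have h0 : 0 ≤ x/a := by positivity
    calc (x/a)^n ≤ (Real.exp (-t))^n := pow_le_pow_left₀ h0 h1 n
      _ = Real.exp (-(n:ℝ)*t) := by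
          rw [← Real.exp_nat_mul]; ring_nf
  -- combine
  have hxn : x^n = a^n * (x/a)^n := by
    rw [div_pow]; field_simp
  calc x^n * |Q.eval x|
      = a^n * (x/a)^n * |Q.eval x| := by rw [← hxn]
    _ ≤ a^n * Real.exp (-(n:ℝ)*t) * (B * Real.exp (((k:ℝ)-1) * Real.sqrt (2*u))) := by
        apply mul_le_mul
        · exact mul_le_mul_of_nonneg_left hxa han.le
        · exact hQx
        · exact abs_nonneg _
        · positivity
    _ = M * Real.exp (-(n:ℝ)*t + ((k:ℝ)-1) * Real.sqrt (2*u)) := by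
        rw [hB', Real.exp_add]
        field_simp
    _ ≤ M * Real.exp (-((n:ℝ)/2) * (a - δ - x)) := by
        apply mul_le_mul_of_nonneg_left _ hM0
        apply Real.exp_le_exp.2
        have h5 : -(n:ℝ)*t + ((k:ℝ)-1) * Real.sqrt (2*u) ≤ -(n:ℝ)*t + (n:ℝ)*((δ+t)/2) := by
          have := mul_le_mul_of_nonneg_left hamgm hN0.le
          linarith [hsqrt]
        have h6 : -(n:ℝ)*t + (n:ℝ)*((δ+t)/2) = -((n:ℝ)/2) * (t - δ) := by ring
        have h7 : t - δ = a - δ - x := by rw [ht]; ring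
        linarith [h7 ▸ (h6 ▸ h5)]

end ChebAux


set_option maxHeartbeats 1000000

/-- For all integers `n ≥ 1`, `k ≥ 1` and every `P ∈ 𝒫_{n,k}`, i.e.
`P(x) = x^(n+1) R(x)` with `R` of degree at most `k-1`, we have
`(1/12) (n/k) V_0^1(P) ≤ ‖P'‖_{[0,1]}`. -/
theorem stmt_0 (n k : ℕ) (hn : 1 ≤ n) (hk : 1 ≤ k)
    (P R : Polynomial ℝ) (hR : R.natDegree ≤ k - 1)
    (hP : P = X ^ (n + 1) * R) :
    (1 / 12) * ((n : ℝ) / (k : ℝ)) *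
        (∫ x in (0:ℝ)..1, |(Polynomial.derivative P).eval x|) ≤
      ⨆ x : Set.Icc (0:ℝ) 1, |(Polynomial.derivative P).eval (x : ℝ)| := by
  have hk0 : (0:ℝ) < k := by exact_mod_cast hk
  have hn0 : (0:ℝ) < n := by exact_mod_cast hn
  -- the quotient polynomial
  set Q : ℝ[X] := Polynomial.C ((n:ℝ)+1) * R + Polynomial.X * Polynomial.derivative R with hQ
  have hQdeg : Q.natDegree ≤ k - 1 := by
    refine le_trans (Polynomial.natDegree_add_le _ _) (max_le ?_ ?_)
    · exact le_trans (Polynomial.natDegree_C_mul_le _ _) hR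
    · rcases Nat.eq_zero_or_pos R.natDegree with h0 | h0
      · obtain ⟨c, hc⟩ := Polynomial.natDegree_eq_zero.1 h0
        rw [← hc]
        simp
      · refine le_trans (Polynomial.natDegree_mul_le) ?_
        have h1 : (Polynomial.X : ℝ[X]).natDegree = 1 := Polynomial.natDegree_X
        have h2 : (Polynomial.derivative R).natDegree < R.natDegree :=
          Polynomial.natDegree_derivative_lt (by omega)
        omega
  have hPQ : Polynomial.derivative P = Polynomial.X^n * Q := by
    rw [hP, Polynomial.derivative_mul, Polynomial.derivative_X_pow, hQ]
    push_cast
    ring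
  have habs : ∀ x : ℝ, 0 ≤ x → |(Polynomial.derivative P).eval x| = x^n * |Q.eval x| := by
    intro x hx
    rw [hPQ]
    simp only [Polynomial.eval_mul, Polynomial.eval_pow, Polynomial.eval_X]
    rw [abs_mul, abs_pow, abs_of_nonneg hx]
  set M : ℝ := ⨆ x : Set.Icc (0:ℝ) 1, |(Polynomial.derivative P).eval (x:ℝ)| with hM
  have hbdd : BddAbove (Set.range fun x : Set.Icc (0:ℝ) 1 =>
      |(Polynomial.derivative P).eval (x:ℝ)|) := by
    have hsub : (Set.range fun x : Set.Icc (0:ℝ) 1 => |(Polynomial.derivative P).eval (x:ℝ)|)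
        ⊆ (fun y : ℝ => |(Polynomial.derivative P).eval y|) '' Set.Icc 0 1 := by
      rintro _ ⟨x, rfl⟩
      exact ⟨(x:ℝ), x.2, rfl⟩
    exact BddAbove.mono hsub
      ((isCompact_Icc.image ((Polynomial.continuous _).abs)).bddAbove)
  have hMb : ∀ z ∈ Set.Icc (0:ℝ) 1, |(Polynomial.derivative P).eval z| ≤ M := by
    intro z hz
    exact le_ciSup hbdd (⟨z, hz⟩ : Set.Icc (0:ℝ) 1)
  have hM0 : 0 ≤ M := le_trans (abs_nonneg _) (hMb 0 ⟨le_refl 0, zero_le_one⟩)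
  have hMQ : ∀ z ∈ Set.Icc (0:ℝ) 1, z^n * |Q.eval z| ≤ M := by
    intro z hz
    rw [← habs z hz.1]
    exact hMb z hz
  have hcont : Continuous fun x : ℝ => |(Polynomial.derivative P).eval x| :=
    (Polynomial.continuous _).abs
  have hint : ∀ a b : ℝ, IntervalIntegrable (fun x => |(Polynomial.derivative P).eval x|)
      MeasureTheory.volume a b := fun a b => hcont.intervalIntegrable a b
  set I : ℝ := ∫ x in (0:ℝ)..1, |(Polynomial.derivative P).eval x| with hI
  have hI0 : 0 ≤ I := intervalIntegral.integral_nonneg zero_le_one (fun x _ => abs_nonneg _)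
  by_cases hcase : (n:ℝ) ≤ 12*k
  · -- easy case
    have hIM : I ≤ M := by
      have := intervalIntegral.integral_mono_on zero_le_one (hint 0 1)
        (intervalIntegrable_const (c := M)) hMb
      simpa using this
    have h1 : (1/12)*((n:ℝ)/k) ≤ 1 := by
      rw [show (1:ℝ)/12*((n:ℝ)/k) = (n:ℝ)/(12*k) by ring, div_le_one (by positivity)]
      linarith
    calc (1/12)*((n:ℝ)/k)*I ≤ 1*I := mul_le_mul_of_nonneg_right h1 hI0
      _ = I := one_mul I
      _ ≤ M := hIM
  · push_neg at hcase
    have hnk : 12*k < n := by exact_mod_cast hcase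
    set b : ℝ := 1 - 4*(k:ℝ)/n with hb
    have hb23 : (2:ℝ)/3 < b := by
      rw [hb]
      have : 4*(k:ℝ)/n < 1/3 := by
        rw [div_lt_iff₀ hn0]
        linarith
      linarith
    have hb0 : (0:ℝ) ≤ b := le_of_lt (lt_trans (by norm_num) hb23)
    have hb1 : b ≤ 1 := by
      rw [hb]
      have : 0 ≤ 4*(k:ℝ)/n := by positivity
      linarith
    -- exponential integrand
    set g : ℝ → ℝ := fun x => M * Real.exp (-((n:ℝ)/2) * (b - x)) with hg
    have hgint : ∀ a c : ℝ, IntervalIntegrable g MeasureTheory.volume a c := by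
      intro a c
      apply Continuous.intervalIntegrable
      continuity
    have hsplit : (∫ x in (0:ℝ)..b, |(Polynomial.derivative P).eval x|)
        + (∫ x in b..(1:ℝ), |(Polynomial.derivative P).eval x|) = I :=
      intervalIntegral.integral_add_adjacent_intervals (hint 0 b) (hint b 1)
    have hI2 : (∫ x in b..(1:ℝ), |(Polynomial.derivative P).eval x|) ≤ (1-b) * M := by
      have := intervalIntegral.integral_mono_on hb1 (hint b 1)
        (intervalIntegrable_const (c := M)) (fun x hx => hMb x ⟨le_trans hb0 hx.1, hx.2⟩)
      simpa [smul_eq_mul] using this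
    have hI1 : (∫ x in (0:ℝ)..b, |(Polynomial.derivative P).eval x|) ≤ ∫ x in (0:ℝ)..b, g x := by
      apply intervalIntegral.integral_mono_on hb0 (hint 0 b) (hgint 0 b)
      intro x hx
      rw [habs x hx.1]
      exact ChebAux.key_decay n k hk hnk Q hQdeg M hMQ hx.1 hx.2
    have hgval : (∫ x in (0:ℝ)..b, g x) ≤ M * (2/(n:ℝ)) := by
      have hF : ∀ x ∈ Set.uIcc (0:ℝ) b, HasDerivAt
          (fun y => (2/(n:ℝ)) * Real.exp (((n:ℝ)/2) * y - ((n:ℝ)/2) * b))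
          (Real.exp (-((n:ℝ)/2) * (b - x))) x := by
        intro x _
        have hg1 : HasDerivAt (fun y : ℝ => ((n:ℝ)/2) * y - ((n:ℝ)/2) * b) ((n:ℝ)/2) x := by
          simpa using ((hasDerivAt_id x).const_mul ((n:ℝ)/2)).sub_const (((n:ℝ)/2) * b)
        have := (hg1.exp).const_mul (2/(n:ℝ))
        refine this.congr_deriv ?_
        rw [show -((n:ℝ)/2) * (b - x) = ((n:ℝ)/2) * x - ((n:ℝ)/2)*b by ring]
        field_simp
      have hexpint : IntervalIntegrable (fun x => Real.exp (-((n:ℝ)/2) * (b - x)))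
          MeasureTheory.volume 0 b := by
        apply Continuous.intervalIntegrable
        continuity
      have hcalc := intervalIntegral.integral_eq_sub_of_hasDerivAt hF hexpint
      have hgsplit : (∫ x in (0:ℝ)..b, g x)
          = M * ∫ x in (0:ℝ)..b, Real.exp (-((n:ℝ)/2) * (b - x)) := by
        rw [hg, intervalIntegral.integral_const_mul]
      rw [hgsplit, hcalc]
      apply mul_le_mul_of_nonneg_left _ hM0
      have h1 : ((n:ℝ)/2) * b - ((n:ℝ)/2) * b = 0 := by ring
      rw [h1, Real.exp_zero]
      have h2 : 0 ≤ Real.exp (((n:ℝ)/2) * 0 - ((n:ℝ)/2) * b) := Real.exp_nonneg _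
      have h3 : 0 ≤ 2/(n:ℝ) := by positivity
      nlinarith
    have hItot : I ≤ M * (2/(n:ℝ)) + (1-b) * M := by
      rw [← hsplit]
      exact add_le_add (le_trans hI1 hgval) hI2
    have h1b : (1:ℝ) - b = 4*(k:ℝ)/n := by rw [hb]; ring
    rw [h1b] at hItot
    have hfac : (0:ℝ) ≤ (1/12)*((n:ℝ)/k) := by positivity
    calc (1/12)*((n:ℝ)/k)*I ≤ (1/12)*((n:ℝ)/k)*(M * (2/(n:ℝ)) + 4*(k:ℝ)/n * M) :=
          mul_le_mul_of_nonneg_left hItot hfac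
      _ = (1/12)*(2*M/k + 4*M) := by field_simp
      _ ≤ (1/12)*(2*M + 4*M) := by
          have : 2*M/k ≤ 2*M := by
            apply div_le_self (by linarith) (by exact_mod_cast hk)
          linarith
      _ ≤ M := by linarith
end

section
/- There is an absolute constant c₂ > 0 such that for all integers n ≥ 1 and k ≥ 1 there exists a polynomial P ∈ P_{n,k} with P(1) ≠ 0 and ‖P′‖_{[0,1]} ≤ c₂ (n/k + 1) |P(1)|. -/
open Polynomial Finset

/-! The witness is the primitive of `(n + k) · ∑_{ν = n}^{n+k-1} b_{n+k-1,ν}`, an upper tail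
of the Bernstein partition of unity of degree `n + k - 1`. Bernstein polynomials are nonnegative
on `[0,1]` and sum to `1`, so this derivative lies between `0` and `n + k` there. The rule
`b'_{m,ν+1} = m (b_{m-1,ν} - b_{m-1,ν+1})` and summation by parts give the primitive explicitly
as `P = ∑_{j<k} (j+1) b_{n+k,n+1+j}`: every term is divisible by `x^{n+1}`, and only the last
one survives at `1`, so `P(1) = k`. Hence `‖P'‖ ≤ n + k = (n/k + 1) P(1)`: `c₂ = 1` works. -/

theorem Finset.sum_range_natCast_add_one_mul_sub {R : Type*} [CommRing R] (f : ℕ → R) (K : ℕ) :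
    ∑ j ∈ range K, ((j : R) + 1) * (f j - f (j + 1)) = ∑ j ∈ range K, f j - K * f K := by
  induction K with
  | zero => simp
  | succ K ih =>
    rw [sum_range_succ, ih, sum_range_succ]
    push_cast
    ring

section BernsteinTail

variable (R : Type*) [CommRing R]

noncomputable def bernsteinTailPrimitive (n k : ℕ) : R[X] :=
  ∑ j ∈ range k, ((j : R[X]) + 1) * bernsteinPolynomial R (n + k) (n + 1 + j)

noncomputable def bernsteinTailCofactor (n k : ℕ) : R[X] :=
  ∑ j ∈ range k,
    (((j + 1) * (n + k).choose (n + 1 + j) : ℕ) : R[X]) * X ^ j * (1 - X) ^ (k - 1 - j)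

theorem X_pow_mul_bernsteinTailCofactor (n k : ℕ) :
    X ^ (n + 1) * bernsteinTailCofactor R n k = bernsteinTailPrimitive R n k := by
  rw [bernsteinTailCofactor, bernsteinTailPrimitive, mul_sum]
  refine sum_congr rfl fun j _ => ?_
  rw [bernsteinPolynomial, show n + k - (n + 1 + j) = k - 1 - j by omega]
  push_cast
  ring

theorem natDegree_bernsteinTailCofactor_le (n k : ℕ) :
    (bernsteinTailCofactor R n k).natDegree ≤ k - 1 := by
  refine natDegree_sum_le_of_forall_le _ _ fun j hj => ?_
  have hj : j < k := mem_range.mp hj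
  have h1X : (1 - X : R[X]).natDegree ≤ 1 :=
    (natDegree_sub_le _ _).trans (max_le (by simp) natDegree_X_le)
  calc _ ≤ 0 + j + (k - 1 - j) * 1 :=
        natDegree_mul_le_of_le (natDegree_mul_le_of_le (natDegree_natCast _).le
          (natDegree_X_pow_le j)) (natDegree_pow_le_of_le _ h1X)
    _ = k - 1 := by omega

theorem derivative_bernsteinTailPrimitive (n K : ℕ) :
    derivative (bernsteinTailPrimitive R n (K + 1)) =
      ((n + K + 1 : ℕ) : R[X]) * ∑ j ∈ range (K + 1), bernsteinPolynomial R (n + K) (n + j) := by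
  have hvanish : bernsteinPolynomial R (n + K) (n + (K + 1)) = 0 :=
    bernsteinPolynomial.eq_zero_of_lt R (by omega)
  simp only [bernsteinTailPrimitive, derivative_sum, derivative_mul, derivative_add,
    derivative_natCast, derivative_one, add_zero, zero_mul, zero_add,
    show ∀ j, n + 1 + j = n + j + 1 from fun j => by omega, bernsteinPolynomial.derivative_succ,
    show n + (K + 1) - 1 = n + K by omega]
  have hsum :=
    sum_range_natCast_add_one_mul_sub (fun j => bernsteinPolynomial R (n + K) (n + j)) (K + 1)
  simp only [← add_assoc] at hsum hvanish
  simp_rw [mul_left_comm _ ((n + (K + 1) : ℕ) : R[X]), ← mul_sum, hsum, hvanish, mul_zero,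
    sub_zero]
  push_cast
  ring

theorem eval_one_bernsteinTailPrimitive (n k : ℕ) :
    (bernsteinTailPrimitive R n k).eval 1 = k := by
  rcases k with _ | K
  · simp [bernsteinTailPrimitive]
  · simp only [bernsteinTailPrimitive, eval_finsetSum, eval_mul, eval_add, eval_natCast, eval_one,
      bernsteinPolynomial.eval_at_1, mul_ite, mul_one, mul_zero,
      show ∀ j, n + 1 + j = n + (K + 1) ↔ j = K from fun j => by omega]
    simp

end BernsteinTail

section Order

variable {R : Type*} [CommRing R] [LinearOrder R] [IsStrictOrderedRing R]

theorem bernsteinPolynomial_eval_nonneg (n ν : ℕ) {x : R} (hx : x ∈ Set.Icc 0 1) :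
    0 ≤ (bernsteinPolynomial R n ν).eval x := by
  have hx₀ : 0 ≤ x := hx.1
  have hx₁ : 0 ≤ 1 - x := sub_nonneg.2 hx.2
  simp only [bernsteinPolynomial, eval_mul, eval_pow, eval_natCast, eval_X, eval_sub, eval_one]
  positivity

theorem sum_eval_bernsteinPolynomial_le_one {n : ℕ} {s : Finset ℕ} (hs : s ⊆ range (n + 1))
    {x : R} (hx : x ∈ Set.Icc 0 1) : ∑ ν ∈ s, (bernsteinPolynomial R n ν).eval x ≤ 1 :=
  calc _ ≤ ∑ ν ∈ range (n + 1), (bernsteinPolynomial R n ν).eval x :=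
        sum_le_sum_of_subset_of_nonneg hs fun ν _ _ => bernsteinPolynomial_eval_nonneg n ν hx
    _ = 1 := by rw [← eval_finsetSum, bernsteinPolynomial.sum, eval_one]

theorem abs_eval_derivative_bernsteinTailPrimitive_le (n K : ℕ) {x : R} (hx : x ∈ Set.Icc 0 1) :
    |(derivative (bernsteinTailPrimitive R n (K + 1))).eval x| ≤ n + K + 1 := by
  have hIco : ∑ j ∈ range (K + 1), (bernsteinPolynomial R (n + K) (n + j)).eval x =
      ∑ ν ∈ Ico n (n + K + 1), (bernsteinPolynomial R (n + K) ν).eval x := by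
    simp [sum_Ico_eq_sum_range, add_assoc]
  have hle : ∑ j ∈ range (K + 1), (bernsteinPolynomial R (n + K) (n + j)).eval x ≤ 1 :=
    hIco ▸ sum_eval_bernsteinPolynomial_le_one (fun ν hν => mem_range.2 (mem_Ico.1 hν).2) hx
  have hnonneg : 0 ≤ ∑ j ∈ range (K + 1), (bernsteinPolynomial R (n + K) (n + j)).eval x :=
    sum_nonneg fun j _ => bernsteinPolynomial_eval_nonneg _ _ hx
  rw [derivative_bernsteinTailPrimitive, eval_mul, eval_natCast, eval_finsetSum,
    abs_of_nonneg (by positivity)]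
  push_cast
  exact mul_le_of_le_one_right (by positivity) hle

end Order

/-- There is an absolute constant `c₂ > 0` such that for all `n, k ≥ 1` there exists
`P ∈ 𝒫_{n,k}` with `P(1) ≠ 0` and `‖P'‖_{[0,1]} ≤ c₂ (n/k + 1) |P(1)|`. -/
theorem stmt_1 : ∃ c₂ : ℝ, 0 < c₂ ∧ ∀ n k : ℕ, 1 ≤ n → 1 ≤ k →
    ∃ P R : Polynomial ℝ, R.natDegree ≤ k - 1 ∧ P = X ^ (n + 1) * R ∧
      P.eval 1 ≠ 0 ∧
      (⨆ x : Set.Icc (0:ℝ) 1, |(Polynomial.derivative P).eval (x : ℝ)|) ≤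
        c₂ * ((n : ℝ) / (k : ℝ) + 1) * |P.eval 1| := by
  refine ⟨1, one_pos, fun n k _ hk => ?_⟩
  obtain ⟨K, rfl⟩ : ∃ K, k = K + 1 := ⟨k - 1, by omega⟩
  refine ⟨bernsteinTailPrimitive ℝ n (K + 1), bernsteinTailCofactor ℝ n (K + 1),
    natDegree_bernsteinTailCofactor_le ℝ n (K + 1),
    (X_pow_mul_bernsteinTailCofactor ℝ n (K + 1)).symm, ?_, ?_⟩
  · rw [eval_one_bernsteinTailPrimitive]
    positivity
  · have : Nonempty (Set.Icc (0 : ℝ) 1) := (Set.nonempty_Icc.2 zero_le_one).to_subtype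
    refine (ciSup_le fun x => abs_eval_derivative_bernsteinTailPrimitive_le n K x.2).trans_eq ?_
    rw [eval_one_bernsteinTailPrimitive, abs_of_pos (by positivity)]
    field_simp
    push_cast
    ring
end

section
/- For all integers n ≥ 1 and k ≥ 1 and every polynomial P ∈ P_{n,k} (i.e., P(x) = x^{n+1}R(x) with R a real polynomial of degree at most k−1), one has (1/6)·(n/k)^{1/2}·V_0^1(P) ≤ sup_{x∈[0,1]} |P′(x)|·√(1−x²), where V_0^1(P) = ∫_0^1 |P′(x)| dx. -/
/-!
Write `P' = xⁿ S` with `deg S ≤ k - 1` and let `M` be the weighted supremum; as `1 - x ≤ 1 - x²`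
on `[0, 1]`, also `|P'(x)| √(1 - x) ≤ M`, which alone gives `∫_{1-δ}^1 |P'| ≤ 2M√δ`.

At `x = 1 - u`, this bound controls `|S|` on `[1 - u/2, 1 - u/4]` by `2M / ((1 - u/2)ⁿ √u)`, and
the extremal property of the Chebyshev polynomial `T_{k-1}` carries it to `x`, which sits at
normalised position `5`, at the price `T_{k-1}(5) ≤ 10^(k-1)`. Since `(x / (1 - u/2))ⁿ` is at
most `e^(-nu/2)`, we get `|P'(x)| ≤ 2M 10^(k-1) e^(-nu/2) / √u`.

For `n ≤ 9k` the bound `∫_0^1 |P'| ≤ 2M` suffices. Otherwise take `δ = 6k/n`: the tail contributes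
`√(n/k) · 2M√δ = 2√6 M`, and on `[0, 1 - δ]` the factor `e^(-nδ/2) = e^(-3k)` absorbs `10^(k-1)`.
-/

open Polynomial Real Set

namespace Polynomial.Chebyshev

theorem eval_T_real_le_two_mul_pow {ξ : ℝ} (hξ : 1 ≤ ξ) (m : ℕ) :
    (T ℝ m).eval ξ ≤ (2 * ξ) ^ m := by
  obtain ⟨t, ht, rfl⟩ : ∃ t, 0 ≤ t ∧ cosh t = ξ :=
    ⟨arcosh ξ, arcosh_nonneg hξ, cosh_arcosh hξ⟩
  have hmt : 0 ≤ (m : ℝ) * t := by positivity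
  calc (T ℝ m).eval (cosh t) = cosh (m * t) := by rw [T_real_cosh]; push_cast; rfl
    _ ≤ exp (m * t) := by
      rw [cosh_eq]; linarith [exp_le_exp.mpr (show -((m : ℝ) * t) ≤ m * t by linarith)]
    _ = exp t ^ m := by rw [← exp_nat_mul]
    _ ≤ (2 * cosh t) ^ m := by
      gcongr; rw [cosh_eq]; linarith [exp_pos (-t)]

theorem abs_eval_le_mul_eval_T {q : ℝ[X]} {m : ℕ} (hq : q.natDegree ≤ m) {s : ℝ}
    (hs : ∀ t ∈ Icc (-1 : ℝ) 1, |q.eval t| ≤ s) {ξ : ℝ} (hξ : 1 ≤ ξ) :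
    |q.eval ξ| ≤ s * (T ℝ m).eval ξ := by
  rcases (le_trans (abs_nonneg _) (hs 0 (by norm_num))).eq_or_lt with rfl | hs₀
  · have : q = 0 := q.eq_zero_of_infinite_isRoot <|
      (Icc_infinite (by norm_num : (-1 : ℝ) < 1)).mono fun t ht => abs_nonpos_iff.mp (hs t ht)
    simp [this]
  have eval_le : ∀ p : ℝ[X], p.natDegree ≤ m → (∀ t ∈ Icc (-1 : ℝ) 1, |p.eval t| ≤ s) →
      p.eval ξ ≤ s * (T ℝ m).eval ξ := by
    intro p hp hps
    have := eval_iterate_derivative_le_of_forall_abs_le_one (k := 0) hξ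
      (P := Polynomial.C s⁻¹ * p) (n := m)
      (degree_le_of_natDegree_le ((natDegree_C_mul_le _ _).trans hp))
      fun t ht => by
        rw [eval_mul, eval_C, abs_mul, abs_inv, abs_of_pos hs₀, inv_mul_le_iff₀ hs₀, mul_one]
        exact hps t ht
    simp only [Function.iterate_zero, id, eval_mul, eval_C] at this
    rwa [inv_mul_le_iff₀ hs₀] at this
  refine abs_le.mpr ⟨?_, eval_le q hq hs⟩
  have := eval_le (-q) (by rwa [natDegree_neg]) (by simpa using hs)
  rw [eval_neg] at this
  linarith

end Polynomial.Chebyshev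

theorem Polynomial.abs_eval_le_of_forall_abs_eval_le_Icc {q : ℝ[X]} {m : ℕ}
    (hq : q.natDegree ≤ m) {a b s y : ℝ} (hab : a < b) (hs : ∀ t ∈ Icc a b, |q.eval t| ≤ s)
    (hy : y ≤ a) :
    |q.eval y| ≤ s * (2 * ((a + b - 2 * y) / (b - a))) ^ m := by
  have hba : 0 < b - a := sub_pos.mpr hab
  -- `t ↦ ((a + b) - (b - a) t) / 2` maps `[-1, 1]` onto `[a, b]` and `ξ` to `y`
  set p := q.comp (C (-(b - a) / 2) * X + C ((a + b) / 2))
  have hp_eval (t : ℝ) : p.eval t = q.eval ((a + b) / 2 - (b - a) / 2 * t) := by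
    simp only [p, eval_comp, eval_add, eval_mul, eval_C, eval_X]; ring_nf
  have hp : p.natDegree ≤ m := natDegree_comp_le.trans <|
    (Nat.mul_le_mul hq natDegree_linear_le).trans_eq (mul_one m)
  set ξ := (a + b - 2 * y) / (b - a)
  have hξ : 1 ≤ ξ := by rw [le_div_iff₀ hba]; linarith
  have hps : ∀ t ∈ Icc (-1 : ℝ) 1, |p.eval t| ≤ s := fun t ⟨h₁, h₂⟩ => by
    rw [hp_eval]; exact hs _ ⟨by nlinarith, by nlinarith⟩
  have hs₀ : 0 ≤ s := (abs_nonneg _).trans (hs a ⟨le_rfl, hab.le⟩)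
  calc |q.eval y| = |p.eval ξ| := by rw [hp_eval]; congr 2; simp only [ξ]; field_simp; ring
    _ ≤ s * (Chebyshev.T ℝ m).eval ξ := Chebyshev.abs_eval_le_mul_eval_T hp hps hξ
    _ ≤ s * (2 * ξ) ^ m := by gcongr; exact Chebyshev.eval_T_real_le_two_mul_pow hξ m

theorem integral_le_of_mul_sqrt_sub_le {f : ℝ → ℝ} (hf : Continuous f) {a b M : ℝ}
    (hab : a ≤ b) (hM : ∀ x ∈ Ioo a b, f x * √(b - x) ≤ M) :
    ∫ x in a..b, f x ≤ 2 * M * √(b - a) := by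
  have hderiv : ∀ x ∈ Ioo a b,
      HasDerivWithinAt (fun x => -2 * M * √(b - x)) (M / √(b - x)) (Ioi x) x := by
    intro x hx
    have hbx : 0 < b - x := sub_pos.mpr hx.2
    refine ((((hasDerivAt_id' x).const_sub b).sqrt hbx.ne').const_mul (-2 * M)).hasDerivWithinAt
      |>.congr_deriv ?_
    field_simp
  have := intervalIntegral.integral_le_sub_of_hasDeriv_right_of_le hab (by fun_prop) hderiv
    hf.integrableOn_Icc fun x hx => by
      rw [le_div_iff₀ (sqrt_pos.mpr (sub_pos.mpr hx.2))]; exact hM x hx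
  simpa using this

theorem integral_le_of_le_mul_exp {f : ℝ → ℝ} (hf : Continuous f) {a b B r : ℝ} (hab : a ≤ b)
    (hr : 0 < r) (hB : 0 ≤ B) (hbd : ∀ x ∈ Ioo a b, f x ≤ B * exp (r * (x - b))) :
    ∫ x in a..b, f x ≤ B / r := by
  have hderiv : ∀ x ∈ Ioo a b,
      HasDerivWithinAt (fun x => B / r * exp (r * (x - b))) (B * exp (r * (x - b))) (Ioi x) x :=
    fun x _ => ((((hasDerivAt_id' x).sub_const b).const_mul r).exp.const_mul (B / r))
      |>.hasDerivWithinAt.congr_deriv (by field_simp)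
  have hle := intervalIntegral.integral_le_sub_of_hasDeriv_right_of_le hab (by fun_prop) hderiv
    hf.integrableOn_Icc hbd
  rw [sub_self, mul_zero, exp_zero, mul_one] at hle
  linarith [show 0 ≤ B / r * exp (r * (a - b)) by positivity]

theorem abs_eval_X_pow_mul_le {S : ℝ[X]} {n m : ℕ} (hS : S.natDegree ≤ m) {M : ℝ}
    (hM : ∀ t ∈ Icc (0 : ℝ) 1, |(X ^ n * S).eval t| * √(1 - t) ≤ M) {x : ℝ} (hx₀ : 0 ≤ x)
    (hx₁ : x < 1) :
    |(X ^ n * S).eval x| ≤ 2 * M * 10 ^ m * exp (-(n * (1 - x) / 2)) / √(1 - x) := by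
  obtain ⟨u, hu, rfl⟩ : ∃ u, 0 < u ∧ x = 1 - u := ⟨1 - x, by linarith, by ring⟩
  rw [sub_sub_cancel]
  have ha : 0 < 1 - u / 2 := by linarith
  -- on `[1 - u/2, 1 - u/4]` the weight `tⁿ √(1 - t)` is at least `(1 - u/2)ⁿ √u / 2`
  have hS_Icc : ∀ t ∈ Icc (1 - u / 2) (1 - u / 4),
      |S.eval t| ≤ 2 * M / ((1 - u / 2) ^ n * √u) := by
    rintro t ⟨hat, htb⟩
    have ht : 0 ≤ t := ha.le.trans hat
    have hsqrt : √u / 2 ≤ √(1 - t) := by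
      rw [show √u / 2 = √(u / 4) by rw [sqrt_div' _ (by norm_num : (0 : ℝ) ≤ 4)]; norm_num]
      exact sqrt_le_sqrt (by linarith)
    have hMt := hM t ⟨ht, by linarith⟩
    rw [eval_mul, eval_pow, eval_X, abs_mul, abs_pow, abs_of_nonneg ht] at hMt
    rw [le_div_iff₀ (by positivity)]
    calc |S.eval t| * ((1 - u / 2) ^ n * √u)
        = 2 * ((1 - u / 2) ^ n * |S.eval t| * (√u / 2)) := by ring
      _ ≤ 2 * (t ^ n * |S.eval t| * √(1 - t)) := by gcongr
      _ ≤ 2 * M := by linarith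
  have hcheb := abs_eval_le_of_forall_abs_eval_le_Icc hS (by linarith) hS_Icc
    (show 1 - u ≤ 1 - u / 2 by linarith)
  have h10 : 2 * ((1 - u / 2 + (1 - u / 4) - 2 * (1 - u)) / (1 - u / 4 - (1 - u / 2))) = 10 := by
    rw [show 1 - u / 2 + (1 - u / 4) - 2 * (1 - u) = 5 * (1 - u / 4 - (1 - u / 2)) by ring,
      mul_div_cancel_right₀ _ (by linarith)]
    norm_num
  rw [h10] at hcheb
  have hxa : (1 - u) ^ n ≤ (1 - u / 2) ^ n * exp (-(n * u / 2)) := by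
    have : 1 - u ≤ (1 - u / 2) * exp (-(u / 2)) := calc
      1 - u ≤ (1 - u / 2) * (1 - u / 2) := by nlinarith
      _ ≤ (1 - u / 2) * exp (-(u / 2)) := by gcongr; linarith [add_one_le_exp (-(u / 2))]
    calc (1 - u) ^ n ≤ ((1 - u / 2) * exp (-(u / 2))) ^ n := by gcongr
      _ = (1 - u / 2) ^ n * exp (-(n * u / 2)) := by rw [mul_pow, ← exp_nat_mul]; ring_nf
  calc |(X ^ n * S).eval (1 - u)| = (1 - u) ^ n * |S.eval (1 - u)| := by
        rw [eval_mul, eval_pow, eval_X, abs_mul, abs_pow, abs_of_nonneg hx₀]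
    _ ≤ (1 - u / 2) ^ n * exp (-(n * u / 2)) * (2 * M / ((1 - u / 2) ^ n * √u) * 10 ^ m) := by
        gcongr
    _ = 2 * M * 10 ^ m * exp (-(n * u / 2)) / √u := by
        have hA : (1 - u / 2) ^ n ≠ 0 := by positivity
        generalize (1 - u / 2) ^ n = A at hA ⊢
        field_simp

theorem integral_abs_eval_X_pow_mul_le {S : ℝ[X]} {n m : ℕ} (hn : 0 < n)
    (hS : S.natDegree ≤ m) {M : ℝ} (hM : ∀ t ∈ Icc (0 : ℝ) 1, |(X ^ n * S).eval t| * √(1 - t) ≤ M)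
    {δ : ℝ} (hδ₀ : 0 < δ) (hδ₁ : δ ≤ 1) :
    ∫ x in (0 : ℝ)..1, |(X ^ n * S).eval x| ≤
      4 * M * 10 ^ m * exp (-(n * δ / 2)) / (n * √δ) + 2 * M * √δ := by
  have hf : Continuous fun x => |(X ^ n * S).eval x| := by fun_prop
  have hM₀ : 0 ≤ M := (hM 1 ⟨zero_le_one, le_rfl⟩).trans' (by simp)
  rw [← intervalIntegral.integral_add_adjacent_intervals (b := 1 - δ)
    (hf.intervalIntegrable _ _) (hf.intervalIntegrable _ _)]
  gcongr
  · have hbd : ∀ x ∈ Ioo 0 (1 - δ), |(X ^ n * S).eval x| ≤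
        2 * M * 10 ^ m * exp (-(n * δ / 2)) / √δ * exp (n / 2 * (x - (1 - δ))) := by
      intro x hx
      refine (abs_eval_X_pow_mul_le hS hM hx.1.le (by linarith [hx.2])).trans ?_
      rw [div_mul_eq_mul_div, mul_assoc _ (exp _), ← exp_add,
        show -(n * δ / 2) + n / 2 * (x - (1 - δ)) = -(n * (1 - x) / 2) by ring]
      gcongr
      linarith [hx.2]
    refine (integral_le_of_le_mul_exp hf (by linarith) (by positivity : (0 : ℝ) < n / 2)
      (by positivity) hbd).trans_eq ?_
    field_simp
    ring
  · simpa using integral_le_of_mul_sqrt_sub_le hf (a := 1 - δ) (b := 1) (by linarith)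
      fun x hx => hM x ⟨by linarith [hx.1], hx.2.le⟩

theorem ten_pow_mul_exp_neg_le {k : ℕ} (hk : 1 ≤ k) :
    10 ^ (k - 1) * exp (-(3 * k)) ≤ 1 / 10 := by
  have he : (10 : ℝ) ^ k ≤ exp (3 * k) := by
    rw [mul_comm, exp_nat_mul]
    gcongr
    rw [show (3 : ℝ) = (3 : ℕ) * 1 by norm_num, exp_nat_mul]
    have := pow_lt_pow_left₀ exp_one_gt_d9 (by norm_num) three_ne_zero
    linarith
  obtain ⟨j, rfl⟩ := Nat.exists_eq_add_of_le' hk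
  rw [exp_neg, Nat.add_sub_cancel, ← div_eq_mul_inv, div_le_iff₀ (exp_pos _)]
  rw [pow_succ] at he
  linarith

theorem sqrt_div_mul_integral_abs_eval_X_pow_mul_le_of_le {S : ℝ[X]} {n k : ℕ} (hk : 1 ≤ k)
    (hkn : 6 * k ≤ n) (hS : S.natDegree ≤ k - 1) {M : ℝ}
    (hM : ∀ t ∈ Icc (0 : ℝ) 1, |(X ^ n * S).eval t| * √(1 - t) ≤ M) :
    √(n / k) * ∫ x in (0 : ℝ)..1, |(X ^ n * S).eval x| ≤ 6 * M := by
  have hk₁ : (1 : ℝ) ≤ k := by exact_mod_cast hk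
  have hkn' : 6 * (k : ℝ) ≤ n := by exact_mod_cast hkn
  have hn : (0 : ℝ) < n := by linarith
  have hM₀ : 0 ≤ M := (hM 1 ⟨zero_le_one, le_rfl⟩).trans' (by simp)
  obtain ⟨δ, hδ⟩ : ∃ δ : ℝ, δ = 6 * k / n := ⟨_, rfl⟩
  have hδ₀ : 0 < δ := by rw [hδ]; positivity
  have hnδ : n * δ = 6 * k := by rw [hδ]; field_simp
  have hV := integral_abs_eval_X_pow_mul_le (by omega) hS hM hδ₀
    (by rw [hδ, div_le_one hn]; exact hkn')
  rw [show (n : ℝ) * δ / 2 = 3 * k by linarith] at hV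
  have hsδ : √(n / k) * √δ = √6 := by
    rw [← sqrt_mul (by positivity)]; congr 1; rw [hδ]; field_simp
  have hhead : 4 * M * (10 ^ (k - 1) * exp (-(3 * k))) / (6 * k) ≤ M / 15 := by
    rw [div_le_iff₀ (by positivity)]
    nlinarith [mul_le_mul_of_nonneg_left (ten_pow_mul_exp_neg_le hk) hM₀]
  have h6 : √6 < 2.45 := by rw [sqrt_lt' (by norm_num)]; norm_num
  calc √(n / k) * ∫ x in (0 : ℝ)..1, |(X ^ n * S).eval x|
      ≤ √(n / k) * (4 * M * 10 ^ (k - 1) * exp (-(3 * k)) / (n * √δ) + 2 * M * √δ) := by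
        gcongr
    _ = (√(n / k) * √δ) * (4 * M * (10 ^ (k - 1) * exp (-(3 * k))) / (n * √δ ^ 2) + 2 * M) := by
        field_simp
    _ = √6 * (4 * M * (10 ^ (k - 1) * exp (-(3 * k))) / (6 * k) + 2 * M) := by
        rw [hsδ, sq_sqrt hδ₀.le, hnδ]
    _ ≤ 2.45 * (M / 15 + 2 * M) := by gcongr
    _ ≤ 6 * M := by linarith

theorem sqrt_div_mul_integral_abs_eval_X_pow_mul_le {S : ℝ[X]} {n k : ℕ} (hk : 1 ≤ k)
    (hS : S.natDegree ≤ k - 1) {M : ℝ}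
    (hM : ∀ t ∈ Icc (0 : ℝ) 1, |(X ^ n * S).eval t| * √(1 - t) ≤ M) :
    √(n / k) * ∫ x in (0 : ℝ)..1, |(X ^ n * S).eval x| ≤ 6 * M := by
  rcases le_or_gt n (9 * k) with hnk | hnk
  · have hV : ∫ x in (0 : ℝ)..1, |(X ^ n * S).eval x| ≤ 2 * M := by
      simpa using integral_le_of_mul_sqrt_sub_le (by fun_prop) zero_le_one
        fun x hx => hM x (Ioo_subset_Icc_self hx)
    have h3 : √(n / k) ≤ 3 := by
      rw [show (3 : ℝ) = √(3 ^ 2) by simp]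
      refine sqrt_le_sqrt ((div_le_iff₀ (by positivity)).mpr ?_)
      exact_mod_cast (by omega : n ≤ 3 ^ 2 * k)
    have hV₀ : 0 ≤ ∫ x in (0 : ℝ)..1, |(X ^ n * S).eval x| :=
      intervalIntegral.integral_nonneg zero_le_one fun x _ => abs_nonneg _
    calc √(n / k) * ∫ x in (0 : ℝ)..1, |(X ^ n * S).eval x| ≤ 3 * (2 * M) := by gcongr
      _ = 6 * M := by ring
  · exact sqrt_div_mul_integral_abs_eval_X_pow_mul_le_of_le hk (by omega) hS hM

theorem Polynomial.derivative_X_pow_succ_mul {A : Type*} [CommSemiring A] (n : ℕ) (p : A[X]) :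
    derivative (X ^ (n + 1) * p) = X ^ n * (C ((n : A) + 1) * p + X * derivative p) := by
  rw [derivative_mul, derivative_X_pow, Nat.add_sub_cancel]
  push_cast
  ring

theorem Polynomial.natDegree_C_mul_add_X_mul_derivative_le {A : Type*} [CommSemiring A] (c : A)
    (p : A[X]) : (C c * p + X * derivative p).natDegree ≤ p.natDegree := by
  refine natDegree_add_le_of_degree_le (natDegree_C_mul_le c p) ?_
  rcases Nat.eq_zero_or_pos p.natDegree with h | h
  · simp [derivative_of_natDegree_zero h]
  · have h₁ := natDegree_derivative_le p
    have h₂ := natDegree_X_le (R := A)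
    exact natDegree_mul_le.trans (by omega)

theorem stmt_2_general (n k : ℕ) (hk : 1 ≤ k)
    (P R : Polynomial ℝ) (hR : R.natDegree ≤ k - 1)
    (hP : P = X ^ (n + 1) * R) :
    (1 / 6) * Real.sqrt ((n : ℝ) / (k : ℝ)) *
        (∫ x in (0:ℝ)..1, |(Polynomial.derivative P).eval x|) ≤
      ⨆ x : Set.Icc (0:ℝ) 1,
        |(Polynomial.derivative P).eval (x : ℝ)| * Real.sqrt (1 - (x : ℝ) ^ 2) := by
  rw [hP, derivative_X_pow_succ_mul]
  set S := C ((n : ℝ) + 1) * R + X * derivative R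
  set g : Icc (0 : ℝ) 1 → ℝ := fun x => |(X ^ n * S).eval (x : ℝ)| * √(1 - (x : ℝ) ^ 2)
  have hM : ∀ t ∈ Icc (0 : ℝ) 1, |(X ^ n * S).eval t| * √(1 - t) ≤ ⨆ x, g x := fun t ht =>
    calc |(X ^ n * S).eval t| * √(1 - t) ≤ |(X ^ n * S).eval t| * √(1 - t ^ 2) := by
          gcongr; nlinarith [ht.1, ht.2]
      _ = g ⟨t, ht⟩ := rfl
      _ ≤ ⨆ x, g x := le_ciSup (isCompact_range (by fun_prop)).bddAbove _
  have := sqrt_div_mul_integral_abs_eval_X_pow_mul_le hk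
    ((natDegree_C_mul_add_X_mul_derivative_le _ R).trans hR) hM
  linarith

/-- For all integers `n ≥ 1`, `k ≥ 1` and every `P ∈ 𝒫_{n,k}`, we have
`(1/6) (n/k)^(1/2) V_0^1(P) ≤ sup_{x ∈ [0,1]} |P'(x)| √(1-x²)`. -/
theorem stmt_2 (n k : ℕ) (hn : 1 ≤ n) (hk : 1 ≤ k)
    (P R : Polynomial ℝ) (hR : R.natDegree ≤ k - 1)
    (hP : P = X ^ (n + 1) * R) :
    (1 / 6) * Real.sqrt ((n : ℝ) / (k : ℝ)) *
        (∫ x in (0:ℝ)..1, |(Polynomial.derivative P).eval x|) ≤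
      ⨆ x : Set.Icc (0:ℝ) 1,
        |(Polynomial.derivative P).eval (x : ℝ)| * Real.sqrt (1 - (x : ℝ) ^ 2) :=
  stmt_2_general n k hk P R hR hP
end

section
/- Let a, b ∈ ℝ with a < b. For every integer k ≥ 1, every real polynomial Q of degree at most k−1, and every real x ∉ (a,b), one has |Q(x)²·(1−x²)| ≤ |(4x − 2(a+b))/(b−a)|^{2k} · sup_{u∈[a,b]} |Q(u)²·(1−u²)|. -/
/-!
The affine map `t ↦ (a + b)/2 + (b - a)/2 * t` carries `[-1, 1]` onto `[a, b]` and a point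
`y` with `|y| ≥ 1` to `x ∉ (a, b)`, where `2|y| = |(4x - 2(a + b))/(b - a)|`. On `[-1, 1]`, the
Chebyshev extremal property (Lagrange interpolation at the nodes `cos (iπ/n)`) gives
`|P(y)| ≤ T_n(y) ‖P‖` for `deg P ≤ n` and `y ≥ 1`, and the recurrence
`T_{n+2} = 2y T_{n+1} - T_n` with `T_n(y) ≥ 1` gives `T_n(y) ≤ (2y)^n`; reflecting `y ↦ -y`
handles `y ≤ -1`. Apply this to `P = Q²(1 - X²)`, of degree at most `2k`.
-/

open Polynomial Set

namespace Polynomial.Chebyshev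

lemma eval_T_real_le_two_mul_pow_s6 {x : ℝ} (hx : 1 ≤ x) : ∀ n : ℕ, (T ℝ n).eval x ≤ (2 * x) ^ n
  | 0 => by simp
  | 1 => by simp; linarith
  | n + 2 => by
    have hT_succ := eval_T_real_le_two_mul_pow_s6 hx (n + 1)
    have hT_ge_one := one_le_eval_T_real n hx
    push_cast at hT_succ ⊢
    rw [T_add_two]
    simp only [eval_sub, eval_mul, eval_ofNat, eval_X]
    calc 2 * x * (T ℝ (n + 1)).eval x - (T ℝ n).eval x ≤ 2 * x * (2 * x) ^ (n + 1) := by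
          nlinarith
      _ = (2 * x) ^ (n + 2) := by ring

lemma abs_eval_le_eval_T_real_mul {n : ℕ} {P : ℝ[X]} (hP : P.natDegree ≤ n) {M : ℝ}
    (hM : ∀ t ∈ Icc (-1 : ℝ) 1, |P.eval t| ≤ M) {x : ℝ} (hx : 1 ≤ x) :
    |P.eval x| ≤ (T ℝ n).eval x * M := by
  have hM₀ : 0 ≤ M := (abs_nonneg _).trans (hM 0 (by norm_num))
  rcases hM₀.eq_or_lt with rfl | hM₀
  · suffices P = 0 by simp [this]
    refine P.eq_zero_of_infinite_isRoot ((Icc_infinite (by norm_num : (-1 : ℝ) < 1)).mono ?_)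
    intro t ht
    simpa using hM t ht
  have hbound (s : ℝ) (hs : |s| = M⁻¹) : s * P.eval x ≤ (T ℝ n).eval x := by
    have hdeg : (s • P).degree ≤ n :=
      degree_le_of_natDegree_le ((natDegree_smul_le s P).trans hP)
    simpa using eval_iterate_derivative_le_of_forall_abs_le_one (k := 0) hx hdeg fun t ht => by
      rw [eval_smul, smul_eq_mul, abs_mul, hs, inv_mul_le_iff₀ hM₀, mul_one]
      exact hM t ht
  have hMinv : |M⁻¹| = M⁻¹ := abs_of_pos (inv_pos.mpr hM₀)
  have hscaled : M⁻¹ * |P.eval x| ≤ (T ℝ n).eval x := by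
    rw [← hMinv, ← abs_mul]
    refine abs_le'.mpr ⟨hbound _ hMinv, ?_⟩
    simpa using hbound (-M⁻¹) (by rw [abs_neg, hMinv])
  rwa [inv_mul_le_iff₀ hM₀, mul_comm] at hscaled

lemma abs_eval_le_two_mul_abs_pow_mul {n : ℕ} {P : ℝ[X]} (hP : P.natDegree ≤ n) {M : ℝ}
    (hM : ∀ t ∈ Icc (-1 : ℝ) 1, |P.eval t| ≤ M) {x : ℝ} (hx : 1 ≤ |x|) :
    |P.eval x| ≤ (2 * |x|) ^ n * M := by
  have hM₀ : 0 ≤ M := (abs_nonneg _).trans (hM 0 (by norm_num))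
  have hpos (P : ℝ[X]) (hP : P.natDegree ≤ n) (hM : ∀ t ∈ Icc (-1 : ℝ) 1, |P.eval t| ≤ M)
      (x : ℝ) (hx : 1 ≤ x) : |P.eval x| ≤ (2 * |x|) ^ n * M := by
    rw [abs_of_pos (a := x) (by linarith)]
    exact (abs_eval_le_eval_T_real_mul hP hM hx).trans
      (mul_le_mul_of_nonneg_right (eval_T_real_le_two_mul_pow_s6 hx n) hM₀)
  rcases le_abs'.mp hx with hx | hx
  · have hreflect : (P.comp (-X)).natDegree ≤ n := by
      simpa [natDegree_comp] using hP
    simpa using hpos (P.comp (-X)) hreflect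
      (fun t ht => by simpa using hM (-t) ⟨by linarith [ht.2], by linarith [ht.1]⟩) (-x)
      (by linarith)
  · exact hpos P hP hM x hx

end Polynomial.Chebyshev

lemma abs_eval_le_abs_pow_mul_of_notMem_Ioo {a b : ℝ} (hab : a < b) {n : ℕ} {P : ℝ[X]}
    (hP : P.natDegree ≤ n) {M : ℝ} (hM : ∀ t ∈ Icc a b, |P.eval t| ≤ M) {x : ℝ}
    (hx : x ∉ Ioo a b) :
    |P.eval x| ≤ |(4 * x - 2 * (a + b)) / (b - a)| ^ n * M := by
  have hba : 0 < b - a := sub_pos.mpr hab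
  set φ : ℝ[X] := C ((a + b) / 2) + C ((b - a) / 2) * X
  have hφ (t : ℝ) : φ.eval t = (a + b) / 2 + (b - a) / 2 * t := by simp [φ]
  have hdeg : (P.comp φ).natDegree ≤ n := by
    refine natDegree_comp_le.trans ?_
    have : φ.natDegree ≤ 1 := by unfold φ; compute_degree
    nlinarith
  have hbound : ∀ t ∈ Icc (-1 : ℝ) 1, |(P.comp φ).eval t| ≤ M := fun t ht => by
    rw [eval_comp, hφ]
    exact hM _ ⟨by nlinarith [ht.1], by nlinarith [ht.2]⟩
  set y := (2 * x - (a + b)) / (b - a)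
  have hy : 1 ≤ |y| := by
    rw [le_abs', le_div_iff₀ hba, div_le_iff₀ hba]
    simp only [mem_Ioo, not_and_or, not_lt] at hx
    rcases hx with hx | hx
    · left; linarith
    · right; linarith
  have hxy : φ.eval y = x := by rw [hφ]; unfold y; field_simp; ring
  have hscale : 2 * |y| = |(4 * x - 2 * (a + b)) / (b - a)| := by
    rw [← abs_two, ← abs_mul, abs_two]; congr 1; unfold y; ring
  simpa [eval_comp, hxy, hscale] using Chebyshev.abs_eval_le_two_mul_abs_pow_mul hdeg hbound hy

/-- Let `a < b`. For every integer `k ≥ 1`, every real polynomial `Q` of degree at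
most `k-1`, and every real `x ∉ (a,b)`, one has
`|Q(x)² (1-x²)| ≤ |(4x - 2(a+b))/(b-a)|^(2k) sup_{u ∈ [a,b]} |Q(u)² (1-u²)|`. -/
theorem stmt_6 (a b : ℝ) (hab : a < b) (k : ℕ) (hk : 1 ≤ k) (Q : Polynomial ℝ)
    (hQ : Q.natDegree ≤ k - 1) (x : ℝ) (hx : x ∉ Set.Ioo a b) :
    |Q.eval x ^ 2 * (1 - x ^ 2)| ≤ |(4 * x - 2 * (a + b)) / (b - a)| ^ (2 * k) *
      ⨆ u : Set.Icc a b, |Q.eval (u : ℝ) ^ 2 * (1 - (u : ℝ) ^ 2)| := by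
  have hdeg : (Q ^ 2 * (1 - X ^ 2)).natDegree ≤ 2 * k := by
    have hQ2 : (Q ^ 2).natDegree ≤ 2 * (k - 1) := natDegree_pow_le.trans (by omega)
    have h1X : ((1 : ℝ[X]) - X ^ 2).natDegree ≤ 2 := by compute_degree
    exact natDegree_mul_le.trans (by omega)
  have hbdd : BddAbove (range fun u : Icc a b => |Q.eval (u : ℝ) ^ 2 * (1 - (u : ℝ) ^ 2)|) :=
    (isCompact_range (by fun_prop)).bddAbove
  simpa using abs_eval_le_abs_pow_mul_of_notMem_Ioo hab hdeg
    (fun t ht => by simpa using le_ciSup hbdd ⟨t, ht⟩) hx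
end

section
/- There is an absolute constant c > 0 with the following property. Let κ ≥ 2 and ν ≥ 20κ be integers and let T be the Chebyshev polynomial for the Müntz space span{x^ν, x^{ν+1}, …, x^{ν+κ}} on [0,1] normalized so that T(1) = 1; that is, T(x) = x^ν Q(x) with Q a real polynomial of degree at most κ, ‖T‖_{[0,1]} = 1, and there exist points 1 = x_0 > x_1 > … > x_κ > 0 with T(x_j) = (−1)^j for j = 0, 1, …, κ. Then the Lebesgue measure of the set {x ∈ [0,1] : |T(x)| ≥ 1/2} is at least c·κ/ν. -/
open Polynomial MeasureTheory

open Set Real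

/-!
Between consecutive alternation points `x (j+1) < x j` the polynomial `T` changes sign, so `Q`
has a root `z j` there; these are all `κ` roots of `Q`, and `T t = t ^ ν * c * ∏ (t - z i)`.
On `[x (j+1), x j]` we have `|T t| = g t * |t - z j|` with `g` log-concave, so `g` is at least its
smaller endpoint value, which is `1 / max (z j - x (j+1)) (x j - z j)` because `|T| = 1` at the
endpoints. Hence `|T| ≥ 1/2` on the outer half of the longer of the two pieces, a quarter of
`[x (j+1), x j]`, and summing over `j` the set `{|T| ≥ 1/2}` has measure at least `(1 - x κ) / 4`.
Finally `1 - x κ ≥ κ / (5ν)`: otherwise at `y = x κ - κ/ν` every factor satisfies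
`|y - z i| ≥ 5 (1 - z i)`, so `|T y| ≥ y ^ ν * 5 ^ κ * |T 1| > 1`, contradicting `‖T‖ = 1`.
-/

theorem exists_mem_Ioo_eq_zero_of_mul_neg {f : ℝ → ℝ} {a b : ℝ} (hab : a ≤ b)
    (hf : ContinuousOn f (Icc a b)) (h : f a * f b < 0) : ∃ c ∈ Ioo a b, f c = 0 := by
  rcases mul_neg_iff.1 h with ⟨ha, hb⟩ | ⟨ha, hb⟩
  · exact intermediate_value_Ioo' hab hf ⟨hb, ha⟩
  · exact intermediate_value_Ioo hab hf ⟨ha, hb⟩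

theorem le_of_iSup_eq {α : Type*} [TopologicalSpace α] {s : Set α} {f : α → ℝ} {C : ℝ}
    (hs : IsCompact s) (hf : ContinuousOn f s) (hsup : (⨆ x : s, f x) = C) {t : α}
    (ht : t ∈ s) : f t ≤ C :=
  hsup ▸ le_ciSup (by simpa only [image_eq_range] using hs.bddAbove_image hf) (⟨t, ht⟩ : s)

theorem Polynomial.eval_eq_leadingCoeff_mul_prod_of_isRoot {R ι : Type*} [CommRing R]
    [IsDomain R] {p : R[X]} {s : Finset ι} {z : ι → R} (hdeg : p.natDegree ≤ s.card)
    (hz : InjOn z s) (hroot : ∀ i ∈ s, p.IsRoot (z i)) (t : R) :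
    p.eval t = p.leadingCoeff * ∏ i ∈ s, (t - z i) := by
  rcases eq_or_ne p 0 with rfl | hp
  · simp
  have hle : s.val.map z ≤ p.roots :=
    (Multiset.le_iff_subset (s.nodup.map_on hz)).2 fun a ha => by
      obtain ⟨i, hi, rfl⟩ := Multiset.mem_map.1 ha
      exact (mem_roots hp).2 (hroot i hi)
  have hroots : p.roots = s.val.map z :=
    (Multiset.eq_of_le_of_card_le hle (by simpa using p.card_roots'.trans hdeg)).symm
  have hsplit : p.Splits := splits_iff_card_roots.2
    (le_antisymm p.card_roots' (by simpa [hroots] using hdeg))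
  rw [hsplit.eval_eq_prod_roots, hroots, Multiset.map_map]
  rfl

theorem concaveOn_finset_sum {ι : Type*} {s : Set ℝ} {F : Finset ι} {f : ι → ℝ → ℝ}
    (hs : Convex ℝ s) (hf : ∀ i ∈ F, ConcaveOn ℝ s (f i)) :
    ConcaveOn ℝ s fun t => ∑ i ∈ F, f i t := by
  classical
  induction F using Finset.induction_on with
  | empty => simpa using concaveOn_const 0 hs
  | insert i F hi ih =>
    simp only [Finset.sum_insert hi]
    exact (hf i (F.mem_insert_self i)).add (ih fun k hk => hf k (Finset.mem_insert_of_mem hk))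

theorem concaveOn_log_abs_sub {a b c : ℝ} (h : a ∉ Icc b c) :
    ConcaveOn ℝ (Icc b c) fun t => log |t - a| := by
  have key : ∀ s : Set ℝ, ConcaveOn ℝ s log → Icc b c ⊆ (fun t => -a + t) ⁻¹' s →
      ConcaveOn ℝ (Icc b c) fun t => log |t - a| := fun s hs hsub =>
    ((hs.translate_right (-a)).subset hsub (convex_Icc b c)).congr fun t _ => by
      simp [log_abs, neg_add_eq_sub]
  rcases not_and_or.1 h with hab | hca
  · exact key _ strictConcaveOn_log_Ioi.concaveOn fun t ht => by
      simp only [mem_preimage, mem_Ioi]; linarith [ht.1, not_le.1 hab]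
  · exact key _ strictConcaveOn_log_Iio.concaveOn fun t ht => by
      simp only [mem_preimage, mem_Iio]; linarith [ht.2, not_le.1 hca]

theorem min_le_of_concaveOn_log {g : ℝ → ℝ} {a b t : ℝ}
    (hg : ConcaveOn ℝ (Icc a b) fun t => log (g t)) (hpos : ∀ t ∈ Icc a b, 0 < g t)
    (ht : t ∈ Icc a b) : min (g a) (g b) ≤ g t := by
  have hab : a ≤ b := ht.1.trans ht.2
  have ha := left_mem_Icc.2 hab
  have hb := right_mem_Icc.2 hab
  rcases min_le_iff.1 (hg.min_le_of_mem_Icc ha hb ht) with h | h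
  · exact min_le_of_left_le ((log_le_log_iff (hpos a ha) (hpos t ht)).1 h)
  · exact min_le_of_right_le ((log_le_log_iff (hpos b hb) (hpos t ht)).1 h)

theorem half_le_abs_of_concaveOn_log {f g : ℝ → ℝ} {a b w t : ℝ} (haw : a < w) (hwb : w < b)
    (hg : ConcaveOn ℝ (Icc a b) fun t => log (g t)) (hpos : ∀ t ∈ Icc a b, 0 < g t)
    (hfg : ∀ t ∈ Icc a b, |f t| = g t * |t - w|) (ha : |f a| = 1) (hb : |f b| = 1)
    (ht : t ∈ Icc a b) (htw : max (w - a) (b - w) ≤ 2 * |t - w|) : 1 / 2 ≤ |f t| := by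
  have hab : a ≤ b := (haw.trans hwb).le
  have hga : g a = 1 / (w - a) := by
    rw [eq_div_iff (sub_pos.2 haw).ne', ← ha, hfg a (left_mem_Icc.2 hab),
      abs_of_neg (sub_neg.2 haw), neg_sub]
  have hgb : g b = 1 / (b - w) := by
    rw [eq_div_iff (sub_pos.2 hwb).ne', ← hb, hfg b (right_mem_Icc.2 hab),
      abs_of_pos (sub_pos.2 hwb)]
  have hM : 0 < max (w - a) (b - w) := lt_max_of_lt_left (sub_pos.2 haw)
  have hgt : 1 / max (w - a) (b - w) ≤ g t := by
    refine le_trans ?_ (min_le_of_concaveOn_log hg hpos ht)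
    rw [hga, hgb]
    exact le_min (one_div_le_one_div_of_le (sub_pos.2 haw) (le_max_left _ _))
      (one_div_le_one_div_of_le (sub_pos.2 hwb) (le_max_right _ _))
  rw [hfg t ht]
  calc 1 / 2 ≤ 1 / max (w - a) (b - w) * |t - w| := by
        rw [div_mul_eq_mul_div, one_mul, le_div_iff₀ hM]; linarith
    _ ≤ g t * |t - w| := by gcongr

theorem ofReal_le_volume_half_le_abs {f g : ℝ → ℝ} {a b w : ℝ} (haw : a < w) (hwb : w < b)
    (hg : ConcaveOn ℝ (Icc a b) fun t => log (g t)) (hpos : ∀ t ∈ Icc a b, 0 < g t)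
    (hfg : ∀ t ∈ Icc a b, |f t| = g t * |t - w|) (ha : |f a| = 1) (hb : |f b| = 1) :
    ENNReal.ofReal (1 / 4 * (b - a)) ≤ volume {t ∈ Ioo a b | 1 / 2 ≤ |f t|} := by
  have half_le : ∀ t ∈ Icc a b, max (w - a) (b - w) ≤ 2 * |t - w| → 1 / 2 ≤ |f t| :=
    fun _ ↦ half_le_abs_of_concaveOn_log haw hwb hg hpos hfg ha hb
  rcases le_total (b - w) (w - a) with hlong | hlong
  · calc ENNReal.ofReal (1 / 4 * (b - a)) ≤ volume (Ioo a ((a + w) / 2)) := by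
          rw [Real.volume_Ioo]; exact ENNReal.ofReal_le_ofReal (by linarith)
      _ ≤ volume {t ∈ Ioo a b | 1 / 2 ≤ |f t|} := measure_mono fun t ht =>
          ⟨⟨ht.1, by linarith [ht.2]⟩, half_le t ⟨ht.1.le, by linarith [ht.2]⟩ (by
            rw [max_eq_left hlong, abs_of_neg (by linarith [ht.2])]; linarith [ht.2])⟩
  · calc ENNReal.ofReal (1 / 4 * (b - a)) ≤ volume (Ioo ((w + b) / 2) b) := by
          rw [Real.volume_Ioo]; exact ENNReal.ofReal_le_ofReal (by linarith)
      _ ≤ volume {t ∈ Ioo a b | 1 / 2 ≤ |f t|} := measure_mono fun t ht =>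
          ⟨⟨by linarith [ht.1], ht.2⟩, half_le t ⟨by linarith [ht.1], ht.2.le⟩ (by
            rw [max_eq_right hlong, abs_of_pos (by linarith [ht.1])]; linarith [ht.1])⟩

theorem abs_pow_mul_prod_sub {ι : Type*} [DecidableEq ι] {s : Finset ι} {z : ι → ℝ} {ν : ℕ}
    {c t : ℝ} {j : ι} (hj : j ∈ s) (ht : 0 ≤ t) :
    |t ^ ν * (c * ∏ i ∈ s, (t - z i))| =
      t ^ ν * |c| * (∏ i ∈ s.erase j, |t - z i|) * |t - z j| := by
  rw [abs_mul, abs_pow, abs_of_nonneg ht, abs_mul, Finset.abs_prod,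
    ← Finset.prod_erase_mul _ _ hj]
  ring

theorem concaveOn_log_pow_mul_prod_abs_sub {ι : Type*} {s : Finset ι} {z : ι → ℝ} {ν : ℕ}
    {c a b : ℝ} (hc : c ≠ 0) (ha : 0 < a) (hz : ∀ i ∈ s, z i ∉ Icc a b) :
    ConcaveOn ℝ (Icc a b) fun t => log (t ^ ν * |c| * ∏ i ∈ s, |t - z i|) := by
  have hsum : ConcaveOn ℝ (Icc a b)
      fun t => (ν : ℝ) * log t + log |c| + ∑ i ∈ s, log |t - z i| :=
    (((strictConcaveOn_log_Ioi.concaveOn.subset (fun t ht => ha.trans_le ht.1)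
      (convex_Icc a b)).smul (Nat.cast_nonneg ν)).add (concaveOn_const _ (convex_Icc a b))).add
      (concaveOn_finset_sum (convex_Icc a b) fun i hi => concaveOn_log_abs_sub (hz i hi))
  refine hsum.congr fun t ht => ?_
  have hne : ∀ i ∈ s, |t - z i| ≠ 0 := fun i hi =>
    abs_ne_zero.2 (sub_ne_zero.2 fun h => hz i hi (h ▸ ht))
  have ht0 : t ≠ 0 := (ha.trans_le ht.1).ne'
  rw [log_mul (by positivity) (Finset.prod_ne_zero_iff.2 hne), log_mul (by positivity)
    (abs_ne_zero.2 hc), log_pow, log_prod hne]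

theorem ofReal_le_volume_half_le_abs_pow_mul_prod {ι : Type*} [DecidableEq ι] {s : Finset ι}
    {z : ι → ℝ} {ν : ℕ} {c a b : ℝ} {j : ι} {f : ℝ → ℝ}
    (hf : ∀ t, f t = t ^ ν * (c * ∏ i ∈ s, (t - z i))) (hc : c ≠ 0) (ha : 0 < a) (hj : j ∈ s)
    (hzj : z j ∈ Ioo a b) (hz : ∀ i ∈ s, i ≠ j → z i ∉ Icc a b) (hfa : |f a| = 1)
    (hfb : |f b| = 1) :
    ENNReal.ofReal (1 / 4 * (b - a)) ≤ volume {t ∈ Ioo a b | 1 / 2 ≤ |f t|} := by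
  have hz' : ∀ i ∈ s.erase j, z i ∉ Icc a b := fun i hi =>
    hz i (Finset.mem_of_mem_erase hi) (Finset.ne_of_mem_erase hi)
  refine ofReal_le_volume_half_le_abs hzj.1 hzj.2 (concaveOn_log_pow_mul_prod_abs_sub hc ha hz')
    (fun t ht => ?_) (fun t ht => by rw [hf, abs_pow_mul_prod_sub hj (ha.le.trans ht.1)]) hfa hfb
  have : 0 < ∏ i ∈ s.erase j, |t - z i| := Finset.prod_pos fun i hi =>
    abs_pos.2 (sub_ne_zero.2 fun h => hz' i hi (h ▸ ht))
  have : 0 < t := ha.trans_le ht.1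
  positivity

theorem ofReal_le_volume_half_le_abs_of_interlacing {ν κ : ℕ} {c : ℝ} {x z : ℕ → ℝ}
    {f : ℝ → ℝ} (hf : ∀ t, f t = t ^ ν * (c * ∏ i ∈ Finset.range κ, (t - z i))) (hc : c ≠ 0)
    (hx : StrictAntiOn x (Iic κ)) (hxκ : 0 < x κ) (hz : ∀ j < κ, z j ∈ Ioo (x (j + 1)) (x j))
    (hfx : ∀ j ≤ κ, |f (x j)| = 1) {j : ℕ} (hj : j < κ) :
    ENNReal.ofReal (1 / 4 * (x j - x (j + 1))) ≤
      volume {t ∈ Ioo (x (j + 1)) (x j) | 1 / 2 ≤ |f t|} := by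
  have hsep : ∀ i ∈ Finset.range κ, i ≠ j → z i ∉ Icc (x (j + 1)) (x j) := by
    intro i hi hij hzi
    rw [Finset.mem_range] at hi
    rcases lt_or_gt_of_ne hij with hlt | hlt
    · linarith [hzi.2, (hz i hi).1, hx.antitoneOn (mem_Iic.2 hi) (mem_Iic.2 hj.le) hlt]
    · linarith [hzi.1, (hz i hi).2, hx.antitoneOn (mem_Iic.2 hj) (mem_Iic.2 hi.le) hlt]
  exact ofReal_le_volume_half_le_abs_pow_mul_prod hf hc
    (hxκ.trans_le (hx.antitoneOn (mem_Iic.2 hj) (mem_Iic.2 le_rfl) hj))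
    (Finset.mem_range.2 hj) (hz j hj) hsep (hfx (j + 1) hj) (hfx j hj.le)

theorem one_lt_five_pow_mul_one_sub_pow {ν κ : ℕ} (hκ : 0 < κ) (hν : 20 * κ ≤ ν) :
    (1 : ℝ) < 5 ^ κ * (1 - 6 * κ / (5 * ν)) ^ ν := by
  have hκR : (0 : ℝ) < κ := by exact_mod_cast hκ
  have hνR : 20 * (κ : ℝ) ≤ ν := by exact_mod_cast hν
  have hν0 : (0 : ℝ) < ν := by linarith
  set u : ℝ := 6 * κ / (5 * ν) with hu_def
  have hνu : ν * u = 6 / 5 * κ := by rw [hu_def]; field_simp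
  have hu : 0 < u ∧ u ≤ 3 / 50 := by
    rw [hu_def, div_le_iff₀ (by positivity)]
    exact ⟨by positivity, by linarith⟩
  have h1u : 0 < 1 - u := by linarith
  -- `log (1 - u) ≥ 1 - (1 - u)⁻¹ = -u / (1 - u)`, and `1 - u ≥ 47 / 50`
  have hlog_sub : -(50 / 47) * u ≤ log (1 - u) := by
    refine le_trans ?_ (one_sub_inv_le_log_of_pos h1u)
    rw [le_sub_iff_add_le, ← le_sub_iff_add_le', inv_le_iff_one_le_mul₀ h1u]
    nlinarith
  have hlog_five : 4 / 3 < log 5 := by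
    have : log 4 ≤ log 5 := log_le_log (by norm_num) (by norm_num)
    have : log 4 = 2 * log 2 := by rw [← log_rpow two_pos]; norm_num
    linarith [log_two_gt_d9]
  rw [← log_pos_iff (by positivity), log_mul (by positivity) (by positivity), log_pow, log_pow]
  nlinarith

theorem pow_mul_prod_le_prod_abs_sub {ι : Type*} {s : Finset ι} {z : ι → ℝ} {l d y : ℝ}
    (hl : 0 < l) (hd : 0 ≤ d) (hz : ∀ i ∈ s, z i ∈ Icc (1 - l) 1) (hy : y + d ≤ 1 - l) :
    (d / l) ^ s.card * ∏ i ∈ s, (1 - z i) ≤ ∏ i ∈ s, |y - z i| := by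
  rw [← Finset.prod_const, ← Finset.prod_mul_distrib]
  refine Finset.prod_le_prod (fun i hi => mul_nonneg (by positivity)
    (sub_nonneg.2 (hz i hi).2)) fun i hi => ?_
  calc d / l * (1 - z i) ≤ d / l * l := by gcongr; linarith [(hz i hi).1]
    _ = d := div_mul_cancel₀ d hl.ne'
    _ ≤ |y - z i| := by rw [abs_sub_comm]; linarith [le_abs_self (z i - y), (hz i hi).1]

theorem div_le_of_abs_pow_mul_prod_le_one {ν κ : ℕ} {c l : ℝ} {z : ℕ → ℝ} (hκ : 0 < κ)
    (hν : 20 * κ ≤ ν) (hl : 0 < l) (hz : ∀ i < κ, z i ∈ Icc (1 - l) 1)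
    (h1 : c * ∏ i ∈ Finset.range κ, (1 - z i) = 1)
    (hT : ∀ t ∈ Icc (0 : ℝ) 1, |t ^ ν * (c * ∏ i ∈ Finset.range κ, (t - z i))| ≤ 1) :
    κ / (5 * ν) ≤ l := by
  by_contra! hlt
  have hνR : 20 * (κ : ℝ) ≤ ν := by exact_mod_cast hν
  have hκR : (0 : ℝ) < κ := by exact_mod_cast hκ
  set d : ℝ := κ / ν with hd_def
  have hd : 0 < d := div_pos hκR (by linarith)
  have hd20 : d ≤ 1 / 20 := by rw [hd_def, div_le_iff₀ (by linarith)]; linarith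
  have hld : l < d / 5 := by rwa [hd_def, div_div, mul_comm]
  have hdl : 5 ≤ d / l := by rw [le_div_iff₀ hl]; linarith
  set y := 1 - l - d with hy_def
  have h6 : (6 : ℝ) * κ / (5 * ν) = d / 5 + d := by rw [hd_def]; ring
  have hy : 1 - 6 * κ / (5 * ν) ≤ y := by rw [hy_def, h6]; linarith
  have hy0 : 0 ≤ y := by linarith
  have hprod := pow_mul_prod_le_prod_abs_sub hl hd.le
    (fun i hi => hz i (Finset.mem_range.1 hi)) (show y + d ≤ 1 - l by linarith)
  rw [Finset.card_range] at hprod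
  have hprod1 : |c| * ∏ i ∈ Finset.range κ, (1 - z i) = 1 := by
    rw [← abs_of_nonneg (Finset.prod_nonneg fun i hi =>
      sub_nonneg.2 (hz i (Finset.mem_range.1 hi)).2), ← abs_mul, h1, abs_one]
  have hTy := hT y ⟨hy0, by linarith⟩
  rw [abs_mul, abs_pow, abs_of_nonneg hy0, abs_mul, Finset.abs_prod] at hTy
  have : (5 : ℝ) ^ κ * (1 - 6 * κ / (5 * ν)) ^ ν ≤ 1 :=
    calc (5 : ℝ) ^ κ * (1 - 6 * κ / (5 * ν)) ^ ν ≤ (d / l) ^ κ * y ^ ν := by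
          have hu : 0 ≤ 1 - 6 * (κ : ℝ) / (5 * ν) := by rw [h6]; linarith
          gcongr
      _ = y ^ ν * (|c| * ((d / l) ^ κ * ∏ i ∈ Finset.range κ, (1 - z i))) := by
          rw [mul_left_comm |c|, hprod1, mul_one, mul_comm]
      _ ≤ y ^ ν * (|c| * ∏ i ∈ Finset.range κ, |y - z i|) := by gcongr
      _ ≤ 1 := hTy
  linarith [one_lt_five_pow_mul_one_sub_pow hκ hν]

theorem ofReal_mul_sub_le_volume {S : Set ℝ} (hS : MeasurableSet S) {x : ℕ → ℝ} {n : ℕ}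
    (hx : StrictAntiOn x (Iic n)) {a : ℝ} (ha : 0 ≤ a)
    (h : ∀ j < n, ENNReal.ofReal (a * (x j - x (j + 1))) ≤ volume (S ∩ Ioo (x (j + 1)) (x j))) :
    ENNReal.ofReal (a * (x 0 - x n)) ≤ volume S := by
  have hdisj : (Finset.range n : Set ℕ).PairwiseDisjoint
      fun j => S ∩ Ioo (x (j + 1)) (x j) := by
    intro i hi j hj hij
    wlog hlt : i < j generalizing i j
    · exact (this hj hi hij.symm (lt_of_le_of_ne (not_lt.1 hlt) hij.symm)).symm
    have hle : x j ≤ x (i + 1) := hx.antitoneOn (mem_Iic.2 (by simp at hj; omega))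
      (mem_Iic.2 (by simp at hj; omega)) hlt
    exact disjoint_left.2 fun t hti htj => by linarith [hti.2.1, htj.2.2]
  calc ENNReal.ofReal (a * (x 0 - x n))
      = ∑ j ∈ Finset.range n, ENNReal.ofReal (a * (x j - x (j + 1))) := by
        rw [← ENNReal.ofReal_sum_of_nonneg fun j hj => mul_nonneg ha (sub_nonneg.2 <|
          (hx (mem_Iic.2 (by simp at hj; omega)) (mem_Iic.2 (by simp at hj; omega))
            (lt_add_one j)).le), ← Finset.mul_sum, Finset.sum_range_sub']
    _ ≤ ∑ j ∈ Finset.range n, volume (S ∩ Ioo (x (j + 1)) (x j)) :=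
        Finset.sum_le_sum fun j hj => h j (Finset.mem_range.1 hj)
    _ = volume (⋃ j ∈ Finset.range n, S ∩ Ioo (x (j + 1)) (x j)) :=
        (measure_biUnion_finset hdisj fun j _ => hS.inter measurableSet_Ioo).symm
    _ ≤ volume S := measure_mono (iUnion₂_subset fun j _ => inter_subset_left)

theorem exists_roots_of_eval_eq_neg_one_pow {ν κ : ℕ} {T Q : ℝ[X]} {x : ℕ → ℝ}
    (hQ : Q.natDegree ≤ κ) (hTQ : T = X ^ ν * Q) (hx : StrictAntiOn x (Iic κ)) (hxκ : 0 < x κ)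
    (hTx : ∀ j ≤ κ, T.eval (x j) = (-1) ^ j) :
    ∃ z : ℕ → ℝ, (∀ j < κ, z j ∈ Ioo (x (j + 1)) (x j)) ∧
      ∀ t, T.eval t = t ^ ν * (Q.leadingCoeff * ∏ i ∈ Finset.range κ, (t - z i)) := by
  have hroot : ∀ j < κ, ∃ w ∈ Ioo (x (j + 1)) (x j), T.eval w = 0 := fun j hj =>
    exists_mem_Ioo_eq_zero_of_mul_neg (hx (mem_Iic.2 hj.le) (mem_Iic.2 hj) (lt_add_one j)).le
      T.continuous.continuousOn (by rw [hTx _ hj, hTx _ hj.le, pow_succ]; ring_nf; norm_num)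
  choose! z hz hzT using hroot
  have hzpos : ∀ i < κ, 0 < z i := fun i hi =>
    hxκ.trans_le (hx.antitoneOn (mem_Iic.2 hi) (mem_Iic.2 le_rfl) hi) |>.trans (hz i hi).1
  refine ⟨z, hz, fun t => ?_⟩
  rw [hTQ, eval_mul, eval_pow, eval_X, Q.eval_eq_leadingCoeff_mul_prod_of_isRoot
    (s := Finset.range κ) (by simpa)]
  · have hzanti : StrictAntiOn z (Iio κ) := fun i hi j hj hij =>
      calc z j < x j := (hz j hj).2
        _ ≤ x (i + 1) := hx.antitoneOn (mem_Iic.2 (by simp at hj; omega)) (mem_Iic.2 hj.le) hij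
        _ < z i := (hz i hi).1
    exact hzanti.injOn.mono fun i hi => Finset.mem_range.1 hi
  · intro i hi
    have := hzT i (Finset.mem_range.1 hi)
    rw [hTQ, eval_mul, eval_pow, eval_X] at this
    exact (mul_eq_zero.1 this).resolve_left (pow_ne_zero _ (hzpos i (Finset.mem_range.1 hi)).ne')

/-- There is an absolute constant `c > 0` such that for integers `κ ≥ 2`,
`ν ≥ 20κ`, if `T` is the Chebyshev polynomial of the Müntz space
`span{x^ν, …, x^(ν+κ)}` on `[0,1]` normalized so `T(1) = 1` (i.e. `T = x^ν Q` with
`deg Q ≤ κ`, `‖T‖_{[0,1]} = 1`, and `T` equioscillates at points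
`1 = x_0 > … > x_κ > 0`), then the Lebesgue measure of
`{x ∈ [0,1] : |T(x)| ≥ 1/2}` is at least `c κ/ν`. -/
theorem stmt_13 : ∃ c : ℝ, 0 < c ∧ ∀ ν κ : ℕ, 2 ≤ κ → 20 * κ ≤ ν →
    ∀ T Q : Polynomial ℝ, Q.natDegree ≤ κ → T = X ^ ν * Q → T.eval 1 = 1 →
    (⨆ x : Set.Icc (0:ℝ) 1, |T.eval (x : ℝ)|) = 1 →
    (∃ x : ℕ → ℝ, x 0 = 1 ∧ (∀ i j : ℕ, i < j → j ≤ κ → x j < x i) ∧ 0 < x κ ∧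
      ∀ j ≤ κ, T.eval (x j) = (-1 : ℝ) ^ j) →
    ENNReal.ofReal (c * (κ : ℝ) / (ν : ℝ)) ≤
      volume {x : ℝ | x ∈ Set.Icc (0:ℝ) 1 ∧ 1/2 ≤ |T.eval x|} := by
  refine ⟨1 / 20, by norm_num, fun ν κ hκ hν T Q hQ hTQ hT1 hsup hosc => ?_⟩
  obtain ⟨x, hx0, hx, hxκ, hTx⟩ := hosc
  have hxanti : StrictAntiOn x (Iic κ) := fun i _ j hj hij => hx i j hij hj
  have hxIcc : ∀ j ≤ κ, x j ∈ Icc (x κ) 1 := fun j hj =>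
    ⟨hxanti.antitoneOn (mem_Iic.2 hj) (mem_Iic.2 le_rfl) hj,
      hx0 ▸ hxanti.antitoneOn (mem_Iic.2 (Nat.zero_le κ)) (mem_Iic.2 hj) (Nat.zero_le j)⟩
  obtain ⟨z, hz, hTz⟩ := exists_roots_of_eval_eq_neg_one_pow hQ hTQ hxanti hxκ hTx
  have hc1 : Q.leadingCoeff * ∏ i ∈ Finset.range κ, (1 - z i) = 1 := by simpa [hTz] using hT1
  have hxκ1 : x κ < 1 := hx0 ▸ hx 0 κ (by omega) le_rfl
  have hwindow : (κ : ℝ) / (5 * ν) ≤ 1 - x κ := by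
    refine div_le_of_abs_pow_mul_prod_le_one (by omega) hν (sub_pos.2 hxκ1)
      (fun i hi => ⟨by linarith [(hxIcc (i + 1) hi).1, (hz i hi).1],
        by linarith [(hxIcc i hi.le).2, (hz i hi).2]⟩) hc1 fun t ht => ?_
    rw [← hTz]
    exact le_of_iSup_eq (f := fun t => |T.eval t|) isCompact_Icc (by fun_prop) hsup ht
  have hpiece : ∀ j < κ, ENNReal.ofReal (1 / 4 * (x j - x (j + 1))) ≤
      volume ({x : ℝ | x ∈ Icc (0 : ℝ) 1 ∧ 1 / 2 ≤ |T.eval x|} ∩ Ioo (x (j + 1)) (x j)) :=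
    fun j hj => (ofReal_le_volume_half_le_abs_of_interlacing (f := fun t => T.eval t) hTz
      (left_ne_zero_of_mul_eq_one hc1) hxanti hxκ hz (fun j hj => by simp [hTx j hj]) hj).trans
      (measure_mono fun t ⟨ht, hTt⟩ => ⟨⟨⟨hxκ.le.trans ((hxIcc (j + 1) hj).1.trans ht.1.le),
        ht.2.le.trans (hxIcc j hj.le).2⟩, hTt⟩, ht⟩)
  calc ENNReal.ofReal (1 / 20 * κ / ν) ≤ ENNReal.ofReal (1 / 4 * (x 0 - x κ)) := by
        refine ENNReal.ofReal_le_ofReal ?_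
        rw [hx0, show (1 : ℝ) / 20 * κ / ν = 1 / 4 * (κ / (5 * ν)) by ring]
        gcongr
    _ ≤ _ := ofReal_mul_sub_le_volume (by measurability) hxanti (by norm_num) hpiece
end

section
/- Let ν ≥ 1 and κ ≥ 1 be integers, and let S(x) := x^ν Q(x), where Q is a real polynomial of degree at most κ. If y ∈ [0,1] satisfies |S(y)| = ‖S‖_{[0,1]} and ‖S‖_{[0,1]} > 0, then y > 1 − 10κ/ν. -/
/-!
Suppose `L := 1 - y ≥ 10κ/ν`. Place `κ + 1` equally spaced nodes, with spacing `L/(2κ)`, in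
`[y + L/2, 1]`. Since `y` maximises `|x^ν Q(x)|`, at every node `|Q| ≤ (y/x)^ν |Q(y)| ≤ e^{-νL/2} |Q(y)|
≤ e^{-5κ} |Q(y)|`. Lagrange interpolation at the nodes extrapolates `Q` to `y` with Lebesgue
constant at most `(4κ)^κ/κ! ≤ (4e)^κ`, so `|Q(y)| ≤ (4e⁻⁴)^κ |Q(y)| < |Q(y)|`, while `Q(y) ≠ 0`
because the maximum is positive.
-/

open Finset Nat Polynomial Real

lemma prod_erase_range_abs_natCast_sub {n i : ℕ} (hi : i ≤ n) :
    ∏ j ∈ (range (n + 1)).erase i, |(j : ℝ) - i| = (i ! : ℝ) * (n - i)! := by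
  have hsplit : (range (n + 1)).erase i = range i ∪ Ico (i + 1) (n + 1) := by
    ext j; simp only [mem_erase, mem_range, mem_union, mem_Ico]; omega
  have hdisj : Disjoint (range i) (Ico (i + 1) (n + 1)) := by
    rw [disjoint_left]; intro j hj hj'; simp only [mem_range, mem_Ico] at hj hj'; omega
  have hlow : ∏ j ∈ range i, |(j : ℝ) - i| = i ! := by
    rw [← descFactorial_self, descFactorial_eq_prod_range, cast_prod]
    refine prod_congr rfl fun j hj => ?_
    have hji := (mem_range.mp hj).le
    rw [abs_sub_comm, abs_of_nonneg (sub_nonneg.mpr (by exact_mod_cast hji)), cast_sub hji]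
  have hhigh : ∏ j ∈ Ico (i + 1) (n + 1), |(j : ℝ) - i| = ((n - i)! : ℝ) := by
    rw [prod_Ico_eq_prod_range, ← prod_range_add_one_eq_factorial, cast_prod,
      show n + 1 - (i + 1) = n - i by omega]
    refine prod_congr rfl fun k _ => ?_
    rw [cast_add, cast_add, cast_add, cast_one, show (i : ℝ) + 1 + k - i = k + 1 by ring]
    exact abs_of_pos (by positivity)
  rw [hsplit, prod_union hdisj, hlow, hhigh]

lemma sum_range_inv_factorial_mul_factorial (n : ℕ) :
    ∑ i ∈ range (n + 1), ((i ! : ℝ) * (n - i)!)⁻¹ = 2 ^ n / n ! := by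
  have hterm : ∀ i ∈ range (n + 1), ((i ! : ℝ) * (n - i)!)⁻¹ = n.choose i / n ! := by
    intro i hi
    rw [cast_choose ℝ (mem_range_succ_iff.mp hi)]
    field_simp
  rw [sum_congr rfl hterm, ← sum_div]
  exact_mod_cast congrArg (fun m : ℕ => (m : ℝ) / n !) (sum_range_choose n)

lemma abs_eval_basis_arithProg_le {n i : ℕ} (hi : i ≤ n) {a d R y : ℝ} (hd : 0 < d)
    (hR : ∀ j ≤ n, |y - (a + j * d)| ≤ R) :
    |(Lagrange.basis (range (n + 1)) (fun j : ℕ => a + j * d) i).eval y|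
      ≤ (R / d) ^ n / ((i ! : ℝ) * (n - i)!) := by
  have hfactor : ∀ j ∈ (range (n + 1)).erase i,
      |(Lagrange.basisDivisor (a + i * d) (a + j * d)).eval y| ≤ R / d * |(j : ℝ) - i|⁻¹ := by
    intro j hj
    obtain ⟨hji, hjn⟩ := mem_erase.mp hj
    have hyj := hR j (mem_range_succ_iff.mp hjn)
    have hji' : (0 : ℝ) < |(j : ℝ) - i| := abs_pos.mpr (sub_ne_zero.mpr (by exact_mod_cast hji))
    calc |(Lagrange.basisDivisor (a + i * d) (a + j * d)).eval y|
        = |y - (a + j * d)| / (|(j : ℝ) - i| * d) := by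
          rw [Lagrange.basisDivisor, eval_mul, eval_C, eval_sub, eval_X, eval_C, abs_mul,
            abs_inv, show a + i * d - (a + j * d) = -(((j : ℝ) - i) * d) by ring, abs_neg,
            abs_mul, abs_of_pos hd]
          ring
      _ ≤ R / (|(j : ℝ) - i| * d) := by gcongr
      _ = R / d * |(j : ℝ) - i|⁻¹ := by ring
  have hcard : ((range (n + 1)).erase i).card = n := by
    rw [card_erase_of_mem (mem_range_succ_iff.mpr hi), card_range]; omega
  calc |(Lagrange.basis (range (n + 1)) (fun j : ℕ => a + j * d) i).eval y|
      = ∏ j ∈ (range (n + 1)).erase i,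
          |(Lagrange.basisDivisor (a + i * d) (a + j * d)).eval y| := by
        rw [Lagrange.basis, eval_prod, abs_prod]
    _ ≤ ∏ j ∈ (range (n + 1)).erase i, R / d * |(j : ℝ) - i|⁻¹ :=
        prod_le_prod (fun _ _ => abs_nonneg _) hfactor
    _ = (R / d) ^ n / ((i ! : ℝ) * (n - i)!) := by
        rw [prod_mul_distrib, prod_const, hcard, prod_inv_distrib,
          prod_erase_range_abs_natCast_sub hi]
        ring

lemma abs_eval_le_of_arithProg {Q : ℝ[X]} {n : ℕ} (hQ : Q.natDegree ≤ n) {a d M R y : ℝ}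
    (hd : 0 < d) (hM : ∀ j ≤ n, |Q.eval (a + j * d)| ≤ M)
    (hR : ∀ j ≤ n, |y - (a + j * d)| ≤ R) :
    |Q.eval y| ≤ M * (2 * R / d) ^ n / n ! := by
  set v : ℕ → ℝ := fun j => a + j * d
  have hv : Set.InjOn v (range (n + 1)) := fun j _ k _ hjk => by
    simpa [v, hd.ne'] using hjk
  have hdeg : Q.degree < (range (n + 1)).card := by
    rw [card_range]
    exact (degree_le_natDegree).trans_lt (by exact_mod_cast Nat.lt_succ_of_le hQ)
  have hM0 : 0 ≤ M := (abs_nonneg _).trans (hM 0 n.zero_le)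
  calc |Q.eval y|
      = |∑ i ∈ range (n + 1), Q.eval (v i) * (Lagrange.basis (range (n + 1)) v i).eval y| := by
        conv_lhs => rw [Lagrange.eq_interpolate hv hdeg]
        simp only [Lagrange.interpolate_apply, eval_finsetSum, eval_mul, eval_C]
    _ ≤ ∑ i ∈ range (n + 1), M * ((R / d) ^ n / ((i ! : ℝ) * (n - i)!)) := by
        refine (abs_sum_le_sum_abs _ _).trans (sum_le_sum fun i hi => ?_)
        have hi := mem_range_succ_iff.mp hi
        rw [abs_mul]
        exact mul_le_mul (hM i hi) (abs_eval_basis_arithProg_le hi hd hR) (abs_nonneg _) hM0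
    _ = M * (2 * R / d) ^ n / n ! := by
        simp only [div_eq_mul_inv, ← mul_sum]
        rw [← div_eq_mul_inv, ← div_eq_mul_inv, sum_range_inv_factorial_mul_factorial]
        ring

lemma abs_le_exp_mul_of_abs_pow_mul_le {f : ℝ → ℝ} {ν : ℕ} {x y : ℝ} (hy : 0 ≤ y) (hyx : y < x)
    (hx : x ≤ 1) (h : |x ^ ν * f x| ≤ |y ^ ν * f y|) :
    |f x| ≤ exp (-(ν * (x - y))) * |f y| := by
  have hx0 : 0 < x := hy.trans_lt hyx
  have hratio : y ≤ x * exp (-(x - y)) :=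
    calc y ≤ x * (1 - (x - y)) := by nlinarith
      _ ≤ x * exp (-(x - y)) := by gcongr; linarith [add_one_le_exp (-(x - y))]
  have hpow : y ^ ν ≤ x ^ ν * exp (-(ν * (x - y))) := by
    calc y ^ ν ≤ (x * exp (-(x - y))) ^ ν := pow_le_pow_left₀ hy hratio ν
      _ = x ^ ν * exp (-(ν * (x - y))) := by rw [mul_pow, ← exp_nat_mul]; ring_nf
  rw [abs_mul, abs_mul, abs_pow, abs_pow, abs_of_pos hx0, abs_of_nonneg hy] at h
  have : x ^ ν * |f x| ≤ x ^ ν * (exp (-(ν * (x - y))) * |f y|) := by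
    calc x ^ ν * |f x| ≤ y ^ ν * |f y| := h
      _ ≤ x ^ ν * exp (-(ν * (x - y))) * |f y| := by gcongr
      _ = _ := by ring
  exact le_of_mul_le_mul_left this (by positivity)

lemma four_mul_pow_div_factorial_lt_exp {κ : ℕ} (hκ : κ ≠ 0) :
    (4 * κ : ℝ) ^ κ / κ ! < exp (5 * κ) := by
  have h4 : (4 : ℝ) < exp 4 := by linarith [add_one_le_exp (4 : ℝ)]
  calc (4 * κ : ℝ) ^ κ / κ ! = 4 ^ κ * ((κ : ℝ) ^ κ / κ !) := by rw [mul_pow, mul_div_assoc]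
    _ ≤ 4 ^ κ * exp κ := by gcongr; exact Real.pow_div_factorial_le_exp _ κ.cast_nonneg κ
    _ < exp 4 ^ κ * exp κ := by gcongr
    _ = exp (5 * κ) := by rw [← exp_nat_mul, ← exp_add]; ring_nf

lemma mul_one_sub_lt_of_isMaxOn {ν κ : ℕ} (hκ : κ ≠ 0) {Q : ℝ[X]} (hQ : Q.natDegree ≤ κ) {y : ℝ}
    (hy : y ∈ Set.Icc (0 : ℝ) 1) (hQy : Q.eval y ≠ 0)
    (hmax : IsMaxOn (fun t => |t ^ ν * Q.eval t|) (Set.Icc 0 1) y) :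
    ν * (1 - y) < 10 * κ := by
  by_contra! hνL
  set L := 1 - y
  have hκ0 : (0 : ℝ) < κ := by positivity
  have hL : 0 < L := by nlinarith [hy.2]
  -- nodes `y + L/2 + j * d`, `j = 0, …, κ`, equally spaced on `[y + L/2, 1]`
  set d := L / (2 * κ)
  have hd : 0 < d := by positivity
  have hjd : ∀ j ≤ κ, 0 ≤ j * d ∧ j * d ≤ L / 2 := fun j hj => ⟨by positivity, by
    calc (j : ℝ) * d ≤ κ * d := by gcongr
      _ = L / 2 := by simp only [d]; field_simp⟩
  have hnode : ∀ j ≤ κ, |Q.eval (y + L / 2 + j * d)| ≤ exp (-(5 * κ)) * |Q.eval y| := by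
    intro j hj
    obtain ⟨hj0, hjL⟩ := hjd j hj
    have hmem : y + L / 2 + j * d ∈ Set.Icc (0 : ℝ) 1 := ⟨by linarith [hy.1], by linarith⟩
    refine (abs_le_exp_mul_of_abs_pow_mul_le (f := fun x => Q.eval x) hy.1 (by linarith) hmem.2
      (isMaxOn_iff.mp hmax _ hmem)).trans ?_
    gcongr exp (-?_) * _
    have : 0 ≤ (ν : ℝ) * (j * d) := by positivity
    linarith [show y + L / 2 + j * d - y = L / 2 + j * d by ring]
  have hdist : ∀ j ≤ κ, |y - (y + L / 2 + j * d)| ≤ L := by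
    intro j hj
    obtain ⟨hj0, hjL⟩ := hjd j hj
    rw [abs_sub_comm, abs_of_nonneg (by linarith)]
    linarith
  have hinterp := abs_eval_le_of_arithProg hQ hd hnode hdist
  rw [show 2 * L / d = 4 * κ by simp only [d]; field_simp; ring, mul_div_assoc] at hinterp
  have hQy' : 0 < |Q.eval y| := abs_pos.mpr hQy
  have : |Q.eval y| < |Q.eval y| :=
    calc |Q.eval y| ≤ exp (-(5 * κ)) * |Q.eval y| * ((4 * κ) ^ κ / κ !) := hinterp
      _ < exp (-(5 * κ)) * |Q.eval y| * exp (5 * κ) := by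
        gcongr; exact four_mul_pow_div_factorial_lt_exp hκ
      _ = |Q.eval y| := by rw [mul_right_comm, ← exp_add]; simp
  exact this.false

/-- Let `ν ≥ 1` and `κ ≥ 1` be integers, and `S(x) := x^ν Q(x)` with `Q` a real
polynomial of degree at most `κ`. If `y ∈ [0,1]` satisfies `|S(y)| = ‖S‖_{[0,1]}`
and `‖S‖_{[0,1]} > 0`, then `y > 1 - 10κ/ν`. -/
theorem stmt_14 (ν κ : ℕ) (hν : 1 ≤ ν) (hκ : 1 ≤ κ) (Q : Polynomial ℝ)
    (hQ : Q.natDegree ≤ κ) (y : ℝ) (hy : y ∈ Set.Icc (0:ℝ) 1)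
    (hmax : |y ^ ν * Q.eval y| =
      ⨆ t : Set.Icc (0:ℝ) 1, |(t : ℝ) ^ ν * Q.eval (t : ℝ)|)
    (hpos : 0 < ⨆ t : Set.Icc (0:ℝ) 1, |(t : ℝ) ^ ν * Q.eval (t : ℝ)|) :
    1 - 10 * (κ : ℝ) / (ν : ℝ) < y := by
  have hbdd : BddAbove (Set.range fun t : Set.Icc (0:ℝ) 1 => |(t : ℝ) ^ ν * Q.eval (t : ℝ)|) := by
    refine ((isCompact_Icc (a := 0) (b := 1)).bddAbove_image
      (f := fun t : ℝ => |t ^ ν * Q.eval t|) (by fun_prop)).mono ?_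
    exact Set.range_subset_iff.mpr fun t => ⟨t, t.2, rfl⟩
  have hyMax : IsMaxOn (fun t => |t ^ ν * Q.eval t|) (Set.Icc 0 1) y :=
    isMaxOn_iff.mpr fun t ht => hmax ▸ le_ciSup hbdd ⟨t, ht⟩
  have hQy : Q.eval y ≠ 0 := fun h => hpos.ne (by rw [← hmax, h, mul_zero, abs_zero])
  have hνy := mul_one_sub_lt_of_isMaxOn (by omega) hQ hy hQy hyMax
  rw [sub_lt_comm, lt_div_iff₀ (by exact_mod_cast hν)]
  linarith
end
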